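/- arXiv:1906.10241 — 8 statements merged into one kernel-verified Lean document; each statement's English description precedes it below -/
import Mathlib

section
/- Let m be a fast sequence and define g(i) = 2·(m°(i))^{i^i}. Then the sequence of real numbers i ↦ m(i)^{1 − 1/g(i)} / log(m(i)) tends to +∞ as i → ∞; equivalently, setting p_i = m(i)^{−1/g(i)}, the sequence p_i · m(i) / log(m(i)) tends to +∞. -/
/-- `mCirc m i = ∏_{j<i} m j` (so `mCirc m 0 = 1`). -/
def mCirc (m : ℕ → ℕ) (i : ℕ) : ℕ := ∏ j ∈ Finset.range i, m j

/-- A *fast sequence* is `m : ℕ → ℕ` with `m 0 ≥ 2` and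
`m i ≥ ((m°(i))^(i^i))^(4·(m°(i))^(i^i))` for all `i`. -/
def FastSeq (m : ℕ → ℕ) : Prop :=
  2 ≤ m 0 ∧ ∀ i, (mCirc m i ^ i ^ i) ^ (4 * mCirc m i ^ i ^ i) ≤ m i

/-- `g i = 2·(m°(i))^(i^i)`, as a real number. -/
noncomputable def gFun (m : ℕ → ℕ) (i : ℕ) : ℝ := 2 * (mCirc m i : ℝ) ^ (i ^ i)

/-!
Every term of a fast sequence is at least `2`, so `g i ≥ 2` and the exponent `1 - 1/g i` is at
least `1/2`; moreover `m i ≥ m°(i) ≥ 2^i`, so `m i → ∞`.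
Finally `x ^ (1/2) / log x → ∞` since `log x = o(x ^ r)` for every `r > 0`.
-/

open Filter Real

theorem Real.tendsto_rpow_div_log_atTop {r : ℝ} (hr : 0 < r) :
    Tendsto (fun x : ℝ => x ^ r / log x) atTop atTop := by
  have hpos : ∀ᶠ x : ℝ in atTop, 0 < log x / x ^ r := by
    filter_upwards [eventually_gt_atTop 1] with x hx
    exact div_pos (log_pos hx) (rpow_pos_of_pos (by linarith) r)
  have hzero : Tendsto (fun x : ℝ => log x / x ^ r) atTop (nhdsWithin 0 (Set.Ioi 0)) :=
    tendsto_nhdsWithin_iff.2 ⟨(isLittleO_log_rpow_atTop hr).tendsto_div_nhds_zero, hpos⟩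
  exact (tendsto_inv_nhdsGT_zero.comp hzero).congr fun x => inv_div _ _

theorem Filter.Tendsto.rpow_div_log_atTop {α : Type*} {l : Filter α} {f e : α → ℝ} {c : ℝ}
    (hc : 0 < c) (hf : Tendsto f l atTop) (he : ∀ᶠ a in l, c ≤ e a) :
    Tendsto (fun a => f a ^ e a / Real.log (f a)) l atTop := by
  refine tendsto_atTop_mono' l ?_ ((tendsto_rpow_div_log_atTop hc).comp hf)
  filter_upwards [hf.eventually_gt_atTop 1, he] with a hfa hea
  exact div_le_div_of_nonneg_right (rpow_le_rpow_of_exponent_le hfa.le hea) (log_pos hfa).le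

theorem Nat.le_pow_mul_self (n k : ℕ) (hk : k ≠ 0) : n ≤ n ^ (k * n) := by
  rcases n.eq_zero_or_pos with rfl | hn
  · exact Nat.zero_le _
  · exact Nat.le_self_pow (by positivity) n

namespace FastSeq

variable {m : ℕ → ℕ}

theorem mCirc_le (hm : FastSeq m) (i : ℕ) : mCirc m i ≤ m i := by
  have hii : i ^ i ≠ 0 := by cases i <;> simp
  calc mCirc m i ≤ mCirc m i ^ i ^ i := Nat.le_self_pow hii _
    _ ≤ (mCirc m i ^ i ^ i) ^ (4 * mCirc m i ^ i ^ i) := Nat.le_pow_mul_self _ 4 (by norm_num)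
    _ ≤ m i := hm.2 i

theorem two_le (hm : FastSeq m) (i : ℕ) : 2 ≤ m i := by
  induction i using Nat.strong_induction_on with
  | _ i ih =>
    rcases i.eq_zero_or_pos with rfl | hi
    · exact hm.1
    · calc 2 ≤ m 0 := hm.1
        _ ≤ mCirc m i := Finset.single_le_prod'
            (fun j hj => one_le_two.trans (ih j (Finset.mem_range.1 hj))) (Finset.mem_range.2 hi)
        _ ≤ m i := hm.mCirc_le i

theorem two_pow_le_mCirc (hm : FastSeq m) (i : ℕ) : 2 ^ i ≤ mCirc m i := by
  simpa [mCirc] using Finset.prod_le_prod' fun j (_ : j ∈ Finset.range i) => hm.two_le j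

theorem tendsto_atTop (hm : FastSeq m) : Tendsto (fun i => (m i : ℝ)) atTop atTop := by
  refine tendsto_natCast_atTop_atTop.comp (tendsto_atTop_mono (fun i => ?_)
    (tendsto_pow_atTop_atTop_of_one_lt one_lt_two))
  exact (hm.two_pow_le_mCirc i).trans (hm.mCirc_le i)

theorem two_le_gFun (hm : FastSeq m) (i : ℕ) : 2 ≤ gFun m i := by
  have h : (1 : ℝ) ≤ mCirc m i := by exact_mod_cast Nat.one_le_two_pow.trans (hm.two_pow_le_mCirc i)
  unfold gFun
  nlinarith [one_le_pow₀ (n := i ^ i) h]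

end FastSeq

/-- For a fast sequence `m` and `g i = 2·(m°(i))^(i^i)`, the sequence
`m(i)^{1 − 1/g(i)} / log m(i)` tends to `+∞`; equivalently, with
`p_i = m(i)^{−1/g(i)}`, the sequence `p_i · m(i) / log m(i)` tends to `+∞`. -/
theorem fastSeq_tendsto_pow_div_log (m : ℕ → ℕ) (hm : FastSeq m) :
    Filter.Tendsto
      (fun i : ℕ => (m i : ℝ) ^ ((1 : ℝ) - 1 / gFun m i) / Real.log (m i))
      Filter.atTop Filter.atTop ∧
    Filter.Tendsto
      (fun i : ℕ => ((m i : ℝ) ^ (-(1 : ℝ) / gFun m i) * m i) / Real.log (m i))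
      Filter.atTop Filter.atTop := by
  have hexp (i : ℕ) : (1 / 2 : ℝ) ≤ 1 - 1 / gFun m i := by
    have := one_div_le_one_div_of_le two_pos (hm.two_le_gFun i)
    linarith
  have hfirst := hm.tendsto_atTop.rpow_div_log_atTop one_half_pos (Eventually.of_forall hexp)
  refine ⟨hfirst, hfirst.congr fun i => ?_⟩
  have hpos : (0 : ℝ) < m i := by exact_mod_cast (two_pos.trans_le (hm.two_le i))
  rw [← rpow_add_one hpos.ne']
  ring_nf
end

section
/- For every fast sequence m there exists a sequence of graphs good for m: that is, there exist symmetric relations E_i on {0,…,m(i)−1} (loops allowed) with E_0 the total relation, and a threshold i* ∈ ℕ, such that for every i ≥ i*: (i) for every u ⊆ {0,…,m(i)−1} with |u| ≤ (m°(i))^{i^i} there exists s with (s,t) ∈ E_i for all t ∈ u; and (ii) for every u ⊆ {0,…,m(i)−1} with |u|·(m°(i))^{i^i} ≥ m(i) there is no s with (s,t) ∈ E_i for all t ∈ u. -/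
/-- `Ē = (E_i)` is a *good sequence of graphs for `m` with threshold `i*`*:
each `E_i` is a symmetric relation on `{0,…,m(i)−1}` (loops allowed), `E_0` is total,
and for all `i ≥ i*`: (i) every `u` with `|u| ≤ (m°(i))^(i^i)` has a common neighbor;
(ii) no `u` with `|u|·(m°(i))^(i^i) ≥ m(i)` has a common neighbor. -/
def GoodFor (m : ℕ → ℕ) (E : ∀ i : ℕ, Fin (m i) → Fin (m i) → Prop)
    (istar : ℕ) : Prop :=
  (∀ i, ∀ s t : Fin (m i), E i s t → E i t s) ∧
  (∀ s t : Fin (m 0), E 0 s t) ∧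
  ∀ i, istar ≤ i →
    (∀ u : Finset (Fin (m i)), u.card ≤ mCirc m i ^ i ^ i →
      ∃ s : Fin (m i), ∀ t ∈ u, E i s t) ∧
    (∀ u : Finset (Fin (m i)), m i ≤ u.card * mCirc m i ^ i ^ i →
      ¬ ∃ s : Fin (m i), ∀ t ∈ u, E i s t)

/-- A number with prescribed digits below `B` is less than `B ^ r`. -/
lemma sum_digits_lt (B r : ℕ) (c : ℕ → ℕ) (h : ∀ l, l < r → c l < B) :
    ∑ l ∈ Finset.range r, c l * B ^ l < B ^ r := by
  induction r with
  | zero => simp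
  | succ r ih =>
    have h1 := ih (fun l hl => h l (by omega))
    have h2 : c r + 1 ≤ B := h r (by omega)
    rw [Finset.sum_range_succ, pow_succ]
    calc ∑ l ∈ Finset.range r, c l * B ^ l + c r * B ^ r
        < B ^ r + c r * B ^ r := by omega
      _ = (c r + 1) * B ^ r := by ring
      _ ≤ B * B ^ r := Nat.mul_le_mul_right _ h2
      _ = B ^ r * B := mul_comm _ _

/-- Extracting the `j`-th digit of a number given by its digits. -/
lemma dig_sum (B r j : ℕ) (hB : 0 < B) (hj : j < r) (c : ℕ → ℕ) (h : ∀ l, c l < B) :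
    (∑ l ∈ Finset.range r, c l * B ^ l) / B ^ j % B = c j := by
  obtain ⟨d, rfl⟩ : ∃ d, r = j + (d + 1) := ⟨r - j - 1, by omega⟩
  rw [Finset.sum_range_add]
  have hlo : ∑ l ∈ Finset.range j, c l * B ^ l < B ^ j :=
    sum_digits_lt _ _ _ (fun l _ => h l)
  have h2 : ∑ l ∈ Finset.range (d + 1), c (j + l) * B ^ (j + l)
      = B ^ j * ∑ l ∈ Finset.range (d + 1), c (j + l) * B ^ l := by
    rw [Finset.mul_sum]
    exact Finset.sum_congr rfl (fun l _ => by rw [pow_add]; ring)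
  rw [h2, Nat.add_mul_div_left _ _ (pow_pos hB j), Nat.div_eq_of_lt hlo, zero_add]
  rw [Finset.sum_range_succ']
  simp only [add_zero, pow_zero, mul_one]
  have h3 : ∑ l ∈ Finset.range d, c (j + (l + 1)) * B ^ (l + 1)
      = B * ∑ l ∈ Finset.range d, c (j + (l + 1)) * B ^ l := by
    rw [Finset.mul_sum]
    exact Finset.sum_congr rfl (fun l _ => by rw [pow_succ]; ring)
  rw [h3, Nat.mul_add_mod, Nat.mod_eq_of_lt (h j)]

/-- Reconstructing a number from its high part, `j`-th digit and low part. -/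
lemma digit_reconstruct (B j t : ℕ) :
    B ^ (j + 1) * (t / B ^ (j + 1)) + B ^ j * (t / B ^ j % B) + t % B ^ j = t := by
  have h2 : B * (t / B ^ j / B) + t / B ^ j % B = t / B ^ j := Nat.div_add_mod _ B
  have h3 : t / B ^ j / B = t / B ^ (j + 1) := by
    rw [Nat.div_div_eq_div_mul, pow_succ]
  calc B ^ (j + 1) * (t / B ^ (j + 1)) + B ^ j * (t / B ^ j % B) + t % B ^ j
      = B ^ j * (B * (t / B ^ j / B) + t / B ^ j % B) + t % B ^ j := by
        rw [h3, pow_succ]; ring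
    _ = B ^ j * (t / B ^ j) + t % B ^ j := by rw [h2]
    _ = t := Nat.div_add_mod t (B ^ j)

/-- Counting numbers below `n` with a prescribed `j`-th digit in base `B`. -/
lemma count_digit (n B j c : ℕ) (hB : 0 < B) :
    (Finset.univ.filter (fun t : Fin n => (t : ℕ) / B ^ j % B = c)).card
      ≤ (n / B ^ (j + 1) + 1) * B ^ j := by
  have hBj : 0 < B ^ j := pow_pos hB j
  have key := Finset.card_le_card_of_injOn
    (f := fun t : Fin n =>
      ((⟨(t : ℕ) / B ^ (j + 1),
          Nat.lt_succ_of_le (Nat.div_le_div_right (le_of_lt t.isLt))⟩ :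
            Fin (n / B ^ (j + 1) + 1)),
       (⟨(t : ℕ) % B ^ j, Nat.mod_lt _ hBj⟩ : Fin (B ^ j))))
    (s := Finset.univ.filter (fun t : Fin n => (t : ℕ) / B ^ j % B = c))
    (t := Finset.univ)
    (fun _ _ => Finset.mem_univ _)
  have card_eq : (Finset.univ : Finset (Fin (n / B ^ (j + 1) + 1) × Fin (B ^ j))).card
      = (n / B ^ (j + 1) + 1) * B ^ j := by simp
  refine le_trans (key ?_) (le_of_eq card_eq)
  intro t₁ h₁ t₂ h₂ heq
  simp only [Finset.coe_filter, Set.mem_setOf_eq, Finset.mem_univ, true_and] at h₁ h₂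
  simp only [Prod.mk.injEq, Fin.mk.injEq] at heq
  obtain ⟨e1, e2⟩ := heq
  apply Fin.ext
  have r1 := digit_reconstruct B j (t₁ : ℕ)
  have r2 := digit_reconstruct B j (t₂ : ℕ)
  rw [h₁] at r1
  rw [h₂] at r2
  rw [e1, e2] at r1
  omega

/-- The key construction: a symmetric relation on `Fin n` such that any `≤ k`
vertices have a common neighbour, but no `n/k` vertices do. -/
lemma construction (n k : ℕ) (hk : 2 ≤ k) (hn : (4 * k ^ 2) ^ k ≤ n) :
    ∃ E : Fin n → Fin n → Prop,
      (∀ s t, E s t → E t s) ∧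
      (∀ u : Finset (Fin n), u.card ≤ k → ∃ s, ∀ t ∈ u, E s t) ∧
      (∀ u : Finset (Fin n), n ≤ u.card * k → ¬ ∃ s, ∀ t ∈ u, E s t) := by
  set B := 4 * k ^ 2 with hBdef
  have hB : 0 < B := by positivity
  have hB1 : 1 ≤ B := hB
  have hn0 : 0 < n := lt_of_lt_of_le (pow_pos hB k) hn
  refine ⟨fun s t => ∃ j, j < k ∧ (s : ℕ) / B ^ j % B = (t : ℕ) / B ^ j % B,
    ?_, ?_, ?_⟩
  · rintro s t ⟨j, hj, hd⟩
    exact ⟨j, hj, hd.symm⟩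
  · -- common neighbour for small sets
    intro u hu
    have e := u.orderIsoOfFin (rfl : u.card = u.card)
    set c : ℕ → ℕ := fun l =>
      if h : l < u.card then ((e ⟨l, h⟩ : Fin n) : ℕ) / B ^ l % B else 0 with hcdef
    have hc : ∀ l, c l < B := by
      intro l
      simp only [hcdef]
      split
      · exact Nat.mod_lt _ hB
      · exact hB
    have hslt : ∑ l ∈ Finset.range u.card, c l * B ^ l < B ^ u.card :=
      sum_digits_lt _ _ _ (fun l _ => hc l)
    have hsn : ∑ l ∈ Finset.range u.card, c l * B ^ l < n :=
      lt_of_lt_of_le hslt (le_trans (Nat.pow_le_pow_right hB1 hu) hn)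
    refine ⟨⟨_, hsn⟩, fun t ht => ?_⟩
    set jf : Fin u.card := e.symm ⟨t, ht⟩ with hjf
    refine ⟨(jf : ℕ), lt_of_lt_of_le jf.isLt hu, ?_⟩
    have hd : ((⟨∑ l ∈ Finset.range u.card, c l * B ^ l, hsn⟩ : Fin n) : ℕ)
        / B ^ (jf : ℕ) % B = c jf :=
      dig_sum B u.card jf hB jf.isLt c hc
    rw [hd]
    have het : e ⟨(jf : ℕ), jf.isLt⟩ = ⟨t, ht⟩ := by
      have : (⟨(jf : ℕ), jf.isLt⟩ : Fin u.card) = jf := rfl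
      rw [this, hjf, OrderIso.apply_symm_apply]
    simp only [hcdef, dif_pos jf.isLt, het]
  · -- no common neighbour for big sets
    rintro u hcard ⟨s, hs⟩
    set N := Finset.univ.filter
      (fun t : Fin n => ∃ j, j < k ∧ (s : ℕ) / B ^ j % B = (t : ℕ) / B ^ j % B) with hNdef
    have hu_sub : u ⊆ N := fun t ht =>
      Finset.mem_filter.mpr ⟨Finset.mem_univ _, hs t ht⟩
    have hNsub : N ⊆ (Finset.range k).biUnion (fun j =>
        Finset.univ.filter (fun t : Fin n => (t : ℕ) / B ^ j % B = (s : ℕ) / B ^ j % B)) := by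
      intro t htN
      rw [hNdef, Finset.mem_filter] at htN
      obtain ⟨-, j, hj, hdig⟩ := htN
      exact Finset.mem_biUnion.mpr ⟨j, Finset.mem_range.mpr hj,
        Finset.mem_filter.mpr ⟨Finset.mem_univ _, hdig.symm⟩⟩
    have hterm : ∀ j, j < k →
        (n / B ^ (j + 1) + 1) * B ^ j ≤ n / B + B ^ (k - 1) := by
      intro j hj
      have e1 : n / B ^ (j + 1) * B ^ j ≤ n / B := by
        have : n / B ^ (j + 1) = n / B / B ^ j := by
          rw [Nat.div_div_eq_div_mul, pow_succ, mul_comm]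
        rw [this]
        exact Nat.div_mul_le_self _ _
      have e2 : B ^ j ≤ B ^ (k - 1) := Nat.pow_le_pow_right hB1 (by omega)
      calc (n / B ^ (j + 1) + 1) * B ^ j = n / B ^ (j + 1) * B ^ j + B ^ j := by ring
        _ ≤ n / B + B ^ (k - 1) := Nat.add_le_add e1 e2
    have hN : N.card ≤ k * (n / B + B ^ (k - 1)) := by
      calc N.card ≤ ((Finset.range k).biUnion (fun j =>
            Finset.univ.filter (fun t : Fin n =>
              (t : ℕ) / B ^ j % B = (s : ℕ) / B ^ j % B))).card :=
            Finset.card_le_card hNsub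
        _ ≤ ∑ j ∈ Finset.range k, (Finset.univ.filter (fun t : Fin n =>
              (t : ℕ) / B ^ j % B = (s : ℕ) / B ^ j % B)).card :=
            Finset.card_biUnion_le
        _ ≤ ∑ _j ∈ Finset.range k, (n / B + B ^ (k - 1)) := by
            refine Finset.sum_le_sum (fun j hj => ?_)
            exact le_trans (count_digit n B j _ hB)
              (hterm j (Finset.mem_range.mp hj))
        _ = k * (n / B + B ^ (k - 1)) := by
            rw [Finset.sum_const, Finset.card_range, smul_eq_mul]
    have h2 : k ^ 2 * (n / B) ≤ n / 4 := by
      have hdd : n / B = n / 4 / k ^ 2 := by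
        rw [hBdef, Nat.div_div_eq_div_mul]
      rw [hdd]
      calc k ^ 2 * (n / 4 / k ^ 2) = n / 4 / k ^ 2 * k ^ 2 := mul_comm _ _
        _ ≤ n / 4 := Nat.div_mul_le_self _ _
    have h3 : k ^ 2 * B ^ (k - 1) ≤ n / 4 := by
      rw [Nat.le_div_iff_mul_le (by norm_num)]
      calc k ^ 2 * B ^ (k - 1) * 4 = B ^ (k - 1) * B := by rw [hBdef]; ring
        _ = B ^ (k - 1 + 1) := (pow_succ _ _).symm
        _ = B ^ k := by congr 1; omega
        _ ≤ n := hn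
    have chain : u.card * k ≤ n / 4 + n / 4 := by
      calc u.card * k ≤ N.card * k :=
            Nat.mul_le_mul_right _ (Finset.card_le_card hu_sub)
        _ ≤ k * (n / B + B ^ (k - 1)) * k := Nat.mul_le_mul_right _ hN
        _ = k ^ 2 * (n / B) + k ^ 2 * B ^ (k - 1) := by ring
        _ ≤ n / 4 + n / 4 := Nat.add_le_add h2 h3
    omega

/-- For every fast sequence `m` there exists a sequence of graphs good for `m`. -/
theorem exists_goodFor (m : ℕ → ℕ) (hm : FastSeq m) :
    ∃ (E : ∀ i : ℕ, Fin (m i) → Fin (m i) → Prop) (istar : ℕ),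
      GoodFor m E istar := by
  have hpos : ∀ j, 1 ≤ m j := by
    intro j
    refine le_trans ?_ (hm.2 j)
    rcases Nat.eq_zero_or_pos (mCirc m j ^ j ^ j) with h | h
    · rw [h]; simp
    · exact Nat.one_le_pow _ _ h
  have hmc2 : ∀ i, 1 ≤ i → 2 ≤ mCirc m i := by
    intro i hi
    obtain ⟨i', rfl⟩ := Nat.exists_eq_add_of_le hi
    rw [add_comm]
    unfold mCirc
    rw [Finset.prod_range_succ']
    calc 2 ≤ m 0 := hm.1
      _ ≤ (∏ j ∈ Finset.range i', m (j + 1)) * m 0 :=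
          Nat.le_mul_of_pos_left _ (Finset.prod_pos (fun j _ => hpos _))
  have hK2 : ∀ i, 1 ≤ i → 2 ≤ mCirc m i ^ i ^ i := by
    intro i hi
    have hii : i ^ i ≠ 0 := (pow_pos (by omega : 0 < i) i).ne'
    exact le_trans (hmc2 i hi) (Nat.le_self_pow hii _)
  have hBK : ∀ i, 1 ≤ i → (4 * (mCirc m i ^ i ^ i) ^ 2) ^ (mCirc m i ^ i ^ i) ≤ m i := by
    intro i hi
    have hk2 := hK2 i hi
    have h4 : 4 ≤ (mCirc m i ^ i ^ i) ^ 2 := by nlinarith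
    calc (4 * (mCirc m i ^ i ^ i) ^ 2) ^ (mCirc m i ^ i ^ i)
        = 4 ^ (mCirc m i ^ i ^ i) * ((mCirc m i ^ i ^ i) ^ 2) ^ (mCirc m i ^ i ^ i) :=
          mul_pow _ _ _
      _ ≤ ((mCirc m i ^ i ^ i) ^ 2) ^ (mCirc m i ^ i ^ i) *
            ((mCirc m i ^ i ^ i) ^ 2) ^ (mCirc m i ^ i ^ i) :=
          Nat.mul_le_mul_right _ (Nat.pow_le_pow_left h4 _)
      _ = (mCirc m i ^ i ^ i) ^ (4 * mCirc m i ^ i ^ i) := by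
          rw [← pow_mul, ← pow_add]
          congr 1
          ring
      _ ≤ m i := hm.2 i
  have key : ∀ i : ℕ, ∃ E : Fin (m i) → Fin (m i) → Prop,
      (∀ s t, E s t → E t s) ∧ (i = 0 → ∀ s t, E s t) ∧
      (1 ≤ i →
        (∀ u : Finset (Fin (m i)), u.card ≤ mCirc m i ^ i ^ i →
          ∃ s, ∀ t ∈ u, E s t) ∧
        (∀ u : Finset (Fin (m i)), m i ≤ u.card * mCirc m i ^ i ^ i →
          ¬ ∃ s, ∀ t ∈ u, E s t)) := by
    intro i
    rcases Nat.eq_zero_or_pos i with rfl | hi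
    · exact ⟨fun _ _ => True, fun _ _ _ => trivial, fun _ _ _ => trivial,
        fun h => absurd h (by omega)⟩
    · obtain ⟨E, hsym, h1, h2⟩ := construction (m i) (mCirc m i ^ i ^ i) (hK2 i hi) (hBK i hi)
      exact ⟨E, hsym, fun h0 => absurd h0 (by omega), fun _ => ⟨h1, h2⟩⟩
  choose E hE using key
  exact ⟨E, 1, fun i => (hE i).1, (hE 0).2.1 rfl, fun i hi => (hE i).2.2 hi⟩
end

section
/- Let m be a fast sequence, Ē = (E_i) a sequence of graphs good for m with threshold i*, and ξ : ℕ → {0,1} a function with ξ⁻¹{1} infinite and ξ(i) = 0 for all i < i*; let T_k and R_k be as in the parameter construction. Then for every k ∈ ℕ, every ν ∈ T_k, every s ≤ (m°(k))^{k^k}, and all ρ_0,…,ρ_{s−1} ∈ T_{k+1} such that (ν, ρ_i↾k) ∈ R_k for every i < s, there exists t < m(k) such that (ν⌢⟨t⟩, ρ_i) ∈ R_{k+1} for every i < s. -/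
/-- The `k`-th level of the tree: sequences `η` of length `k` with `η j < m j`. -/
def TreeLevel (m : ℕ → ℕ) (k : ℕ) : Type := (j : Fin k) → Fin (m j)

/-- Restriction `η ↾ k` of a sequence of length `k+1`. -/
def restrict {m : ℕ → ℕ} {k : ℕ} (η : TreeLevel m (k + 1)) : TreeLevel m k :=
  fun j => η j.castSucc

/-- Extension `ν⌢⟨t⟩` of a sequence `ν` of length `k` by a last value `t < m k`. -/
def extendSeq {m : ℕ → ℕ} {k : ℕ} (ν : TreeLevel m k) (t : Fin (m k)) :
    TreeLevel m (k + 1) :=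
  Fin.snoc (α := fun j : Fin (k + 1) => Fin (m j)) ν t

/-- The relations `R_k` of the parameter construction:
`R_0` holds of the pair of empty sequences, and `(η₁,η₂) ∈ R_{k+1}` iff
`(η₁↾k, η₂↾k) ∈ R_k` and, in case `ξ k = 1`, additionally `(η₁ k, η₂ k) ∈ E_k`. -/
def Rrel (m : ℕ → ℕ) (E : ∀ i : ℕ, Fin (m i) → Fin (m i) → Prop)
    (ξ : ℕ → Bool) : ∀ k : ℕ, TreeLevel m k → TreeLevel m k → Prop
  | 0 => fun _ _ => True
  | k + 1 => fun η₁ η₂ =>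
      Rrel m E ξ k (restrict η₁) (restrict η₂) ∧
      (ξ k = true → E k (η₁ (Fin.last k)) (η₂ (Fin.last k)))

/-! When `ξ k = 1` we have `k ≥ i*`, so clause (i) of goodness yields a common `E_k`-neighbour
`t` of the last entries of the `ρ_i`; when `ξ k = 0` the last coordinate is unconstrained and
any `t < m k` works, `m k` being positive because `m` is fast. -/

lemma FastSeq.pos {m : ℕ → ℕ} (hm : FastSeq m) (j : ℕ) : 0 < m j := by
  induction j using Nat.strong_induction_on with
  | _ j ih =>
    have hprod : 0 < mCirc m j :=
      Finset.prod_pos fun i hi => ih i (Finset.mem_range.mp hi)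
    calc 0 < (mCirc m j ^ j ^ j) ^ (4 * mCirc m j ^ j ^ j) := by positivity
      _ ≤ m j := hm.2 j

lemma GoodFor.exists_forall_adj {m : ℕ → ℕ} {E : ∀ i : ℕ, Fin (m i) → Fin (m i) → Prop}
    {istar k : ℕ} (hE : GoodFor m E istar) (hk : istar ≤ k) {s : ℕ}
    (hs : s ≤ mCirc m k ^ k ^ k) (f : Fin s → Fin (m k)) :
    ∃ t : Fin (m k), ∀ i, E k t (f i) := by
  have hcard : (Finset.univ.image f).card ≤ mCirc m k ^ k ^ k :=
    Finset.card_image_le.trans (by simpa using hs)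
  obtain ⟨t, ht⟩ := (hE.2.2 k hk).1 _ hcard
  exact ⟨t, fun i => ht _ (Finset.mem_image_of_mem f (Finset.mem_univ i))⟩

section extendSeq

variable {m : ℕ → ℕ} {k : ℕ}

@[simp]
lemma restrict_extendSeq (ν : TreeLevel m k) (t : Fin (m k)) :
    restrict (extendSeq ν t) = ν :=
  funext fun j => Fin.snoc_castSucc (α := fun j : Fin (k + 1) => Fin (m j)) _ _ j

@[simp]
lemma extendSeq_last (ν : TreeLevel m k) (t : Fin (m k)) :
    extendSeq ν t (Fin.last k) = t :=
  Fin.snoc_last (α := fun j : Fin (k + 1) => Fin (m j)) _ _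

lemma Rrel_extendSeq_iff (E : ∀ i : ℕ, Fin (m i) → Fin (m i) → Prop) (ξ : ℕ → Bool)
    (ν : TreeLevel m k) (t : Fin (m k)) (η : TreeLevel m (k + 1)) :
    Rrel m E ξ (k + 1) (extendSeq ν t) η ↔
      Rrel m E ξ k ν (restrict η) ∧ (ξ k = true → E k t (η (Fin.last k))) := by
  simp only [Rrel, restrict_extendSeq, extendSeq_last]

end extendSeq

theorem parameter_small_extension_general (m : ℕ → ℕ) (hm : FastSeq m)
    (E : ∀ i : ℕ, Fin (m i) → Fin (m i) → Prop) (istar : ℕ)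
    (hE : GoodFor m E istar) (ξ : ℕ → Bool)
    (hξ0 : ∀ i < istar, ξ i = false)
    (k : ℕ) (ν : TreeLevel m k) (s : ℕ) (hs : s ≤ mCirc m k ^ k ^ k)
    (ρ : Fin s → TreeLevel m (k + 1))
    (hρ : ∀ i : Fin s, Rrel m E ξ k ν (restrict (ρ i))) :
    ∃ t : Fin (m k), ∀ i : Fin s, Rrel m E ξ (k + 1) (extendSeq ν t) (ρ i) := by
  obtain ⟨t, ht⟩ : ∃ t : Fin (m k), ∀ i, ξ k = true → E k t (ρ i (Fin.last k)) := by
    cases hξk : ξ k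
    · exact ⟨⟨0, hm.pos k⟩, fun _ h => Bool.noConfusion h⟩
    · have hk : istar ≤ k := not_lt.mp fun hlt => by simp [hξ0 k hlt] at hξk
      obtain ⟨t, ht⟩ := hE.exists_forall_adj hk hs fun i => ρ i (Fin.last k)
      exact ⟨t, fun i _ => ht i⟩
  exact ⟨t, fun i => (Rrel_extendSeq_iff E ξ ν t (ρ i)).2 ⟨hρ i, ht i⟩⟩

/-- Small sets of connected successors have a common connected successor:
if `s ≤ (m°(k))^(k^k)`, `ν ∈ T_k`, and `ρ_0,…,ρ_{s−1} ∈ T_{k+1}` with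
`(ν, ρ_i↾k) ∈ R_k` for all `i < s`, then there is `t < m k` with
`(ν⌢⟨t⟩, ρ_i) ∈ R_{k+1}` for all `i < s`. -/
theorem parameter_small_extension (m : ℕ → ℕ) (hm : FastSeq m)
    (E : ∀ i : ℕ, Fin (m i) → Fin (m i) → Prop) (istar : ℕ)
    (hE : GoodFor m E istar) (ξ : ℕ → Bool)
    (hξinf : {i : ℕ | ξ i = true}.Infinite)
    (hξ0 : ∀ i < istar, ξ i = false)
    (k : ℕ) (ν : TreeLevel m k) (s : ℕ) (hs : s ≤ mCirc m k ^ k ^ k)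
    (ρ : Fin s → TreeLevel m (k + 1))
    (hρ : ∀ i : Fin s, Rrel m E ξ k ν (restrict (ρ i))) :
    ∃ t : Fin (m k), ∀ i : Fin s, Rrel m E ξ (k + 1) (extendSeq ν t) (ρ i) :=
  parameter_small_extension_general m hm E istar hE ξ hξ0 k ν s hs ρ hρ
end

section
/- Let m be a fast sequence, Ē = (E_i) a sequence of graphs good for m with threshold i*, and ξ : ℕ → {0,1} a function with ξ⁻¹{1} infinite and ξ(i) = 0 for all i < i*; let T_k and R_k be as in the parameter construction. Then for every function η : ℕ → ℕ with η(i) < m(i) for all i, the set { ρ : ℕ → ℕ : ρ(i) < m(i) for all i, and (η↾k, ρ↾k) ∈ R_k for every k ∈ ℕ } has cardinality 2^{ℵ₀}. -/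
/-- Restriction of an infinite branch to its first `k` values. -/
def branchRestrict {m : ℕ → ℕ} (η : ∀ i : ℕ, Fin (m i)) (k : ℕ) :
    TreeLevel m k :=
  fun j => η j

lemma m_pos (m : ℕ → ℕ) (hm : FastSeq m) : ∀ i, 1 ≤ m i := by
  intro i
  induction i using Nat.strong_induction_on with
  | _ i ih =>
    match i with
    | 0 => exact le_trans (by norm_num) hm.1
    | Nat.succ n =>
      have h1 : 1 ≤ mCirc m (n+1) := by
        apply Finset.one_le_prod'
        intro j hj; exact ih j (Finset.mem_range.mp hj)
      calc 1 ≤ (mCirc m (n+1) ^ (n+1) ^ (n+1)) ^ (4 * mCirc m (n+1) ^ (n+1) ^ (n+1)) :=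
            Nat.one_le_pow _ _ (Nat.pos_of_ne_zero (by positivity))
        _ ≤ m (n+1) := hm.2 (n+1)

lemma mCirc_two (m : ℕ → ℕ) (hm : FastSeq m) {i : ℕ} (hi : 1 ≤ i) :
    2 ≤ mCirc m i ^ i ^ i := by
  have h0 : m 0 ≤ mCirc m i := by
    apply Finset.single_le_prod' (fun j _ => m_pos m hm j)
    exact Finset.mem_range.mpr hi
  have h2 : 2 ≤ mCirc m i := le_trans hm.1 h0
  calc 2 ≤ mCirc m i := h2
    _ ≤ mCirc m i ^ i ^ i := Nat.le_self_pow (by positivity) _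

lemma two_neighbors (m : ℕ → ℕ) (hm : FastSeq m)
    (E : ∀ i : ℕ, Fin (m i) → Fin (m i) → Prop) (istar : ℕ)
    (hE : GoodFor m E istar) {i : ℕ} (hi : istar ≤ i) (s : Fin (m i)) :
    ∃ a b : Fin (m i), a ≠ b ∧ E i s a ∧ E i s b := by
  obtain ⟨hsym, htot, hgood⟩ := hE
  match i with
  | 0 =>
    have h2 : 2 ≤ m 0 := hm.1
    refine ⟨⟨0, by omega⟩, ⟨1, by omega⟩, ?_, htot s _, htot s _⟩
    intro h
    have := congrArg Fin.val h
    simp at this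
  | Nat.succ n =>
    set i := n + 1
    have hN2 : 2 ≤ mCirc m i ^ i ^ i := mCirc_two m hm (by omega)
    by_contra hcon
    push_neg at hcon
    have huniq : ∀ a b : Fin (m i), E i s a → E i s b → a = b := by
      intro a b ha hb
      by_contra hab
      exact (hcon a b hab ha) hb
    obtain ⟨a, ha⟩ := (hgood i hi).1 {s} (by simp; omega)
    have hsa : E i s a := hsym i a s (ha s (by simp))
    have hall : ∀ t : Fin (m i), E i a t := by
      intro t
      obtain ⟨w, hw⟩ := (hgood i hi).1 {s, t} (le_trans (Finset.card_insert_le _ _ |>.trans (by simp)) hN2)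
      have hws : E i w s := hw s (by simp)
      have hwt : E i w t := hw t (by simp)
      have : w = a := huniq w a (hsym i w s hws) hsa
      exact this ▸ hwt
    exact (hgood i hi).2 Finset.univ
      (by
        rw [Finset.card_univ, Fintype.card_fin]
        exact Nat.le_mul_of_pos_right _ (by omega))
      ⟨a, fun t _ => hall t⟩

lemma rrel_branch_iff (m : ℕ → ℕ) (E : ∀ i : ℕ, Fin (m i) → Fin (m i) → Prop)
    (ξ : ℕ → Bool) (η ρ : ∀ i : ℕ, Fin (m i)) (k : ℕ) :
    Rrel m E ξ k (branchRestrict η k) (branchRestrict ρ k) ↔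
      ∀ i < k, ξ i = true → E i (η i) (ρ i) := by
  induction k with
  | zero => simp [Rrel]
  | succ k ih =>
    have hres : ∀ σ : ∀ i : ℕ, Fin (m i),
        restrict (branchRestrict σ (k+1)) = branchRestrict σ k := fun _ => rfl
    have hlast : ∀ σ : ∀ i : ℕ, Fin (m i),
        branchRestrict σ (k+1) (Fin.last k) = σ k := fun _ => rfl
    show (Rrel m E ξ k (restrict (branchRestrict η (k+1))) (restrict (branchRestrict ρ (k+1))) ∧ _) ↔ _
    rw [hres, hres, ih]
    constructor
    · rintro ⟨h1, h2⟩ i hik hξ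
      rcases Nat.lt_succ_iff_lt_or_eq.mp hik with h | h
      · exact h1 i h hξ
      · subst h; exact (hlast η) ▸ (hlast ρ) ▸ h2 hξ
    · intro h
      exact ⟨fun i hik => h i (Nat.lt_succ_of_lt hik),
        fun hξ => (hlast η) ▸ (hlast ρ) ▸ h k (Nat.lt_succ_self k) hξ⟩


/-- Fullness: for every branch `η` of the tree, the set of branches `ρ`
connected to `η` at every level (i.e. `(η↾k, ρ↾k) ∈ R_k` for all `k`) has
cardinality continuum. -/
theorem parameter_fullness (m : ℕ → ℕ) (hm : FastSeq m)
    (E : ∀ i : ℕ, Fin (m i) → Fin (m i) → Prop) (istar : ℕ)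
    (hE : GoodFor m E istar) (ξ : ℕ → Bool)
    (hξinf : {i : ℕ | ξ i = true}.Infinite)
    (hξ0 : ∀ i < istar, ξ i = false)
    (η : ∀ i : ℕ, Fin (m i)) :
    Cardinal.mk
      ↥{ρ : ∀ i : ℕ, Fin (m i) |
        ∀ k : ℕ, Rrel m E ξ k (branchRestrict η k) (branchRestrict ρ k)} =
      Cardinal.continuum := by
  classical
  have hset : {ρ : ∀ i : ℕ, Fin (m i) |
        ∀ k : ℕ, Rrel m E ξ k (branchRestrict η k) (branchRestrict ρ k)}
      = {ρ : ∀ i : ℕ, Fin (m i) | ∀ i, ξ i = true → E i (η i) (ρ i)} := by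
    ext ρ
    constructor
    · intro h i hξ
      exact (rrel_branch_iff m E ξ η ρ (i+1)).mp (h (i+1)) i (Nat.lt_succ_self i) hξ
    · intro h k
      exact (rrel_branch_iff m E ξ η ρ k).mpr (fun i _ => h i)
  rw [hset]
  have e : ↥{ρ : ∀ i : ℕ, Fin (m i) | ∀ i, ξ i = true → E i (η i) (ρ i)}
      ≃ ∀ i : ℕ, {t : Fin (m i) // ξ i = true → E i (η i) t} :=
    Equiv.subtypePiEquivPi (p := fun i (t : Fin (m i)) => ξ i = true → E i (η i) t)
  rw [Cardinal.mk_congr e]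
  -- istar fact
  have hge : ∀ i : ℕ, ξ i = true → istar ≤ i := by
    intro i hξ
    by_contra h
    push_neg at h
    simp [hξ0 i h] at hξ
  -- two distinct elements in each fiber where ξ is true, one otherwise
  have hab : ∀ i : ℕ, ∃ a b : {t : Fin (m i) // ξ i = true → E i (η i) t},
      ξ i = true → a ≠ b := by
    intro i
    by_cases hξ : ξ i = true
    · obtain ⟨a, b, hne, ha, hb⟩ := two_neighbors m hm E istar hE (hge i hξ) (η i)
      exact ⟨⟨a, fun _ => ha⟩, ⟨b, fun _ => hb⟩,
        fun _ h => hne (congrArg Subtype.val h)⟩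
    · exact ⟨⟨η i, fun h => absurd h hξ⟩, ⟨η i, fun h => absurd h hξ⟩,
        fun h => absurd h hξ⟩
  choose A B hAB using hab
  apply le_antisymm
  · -- ≤ continuum
    have hinj : Function.Injective
        (fun (f : ∀ i : ℕ, {t : Fin (m i) // ξ i = true → E i (η i) t}) (i : ℕ) =>
          ((f i : Fin (m i)) : ℕ)) := by
      intro f g h
      funext i
      have := congrFun h i
      exact Subtype.ext (Fin.ext this)
    calc Cardinal.mk (∀ i : ℕ, {t : Fin (m i) // ξ i = true → E i (η i) t})
        ≤ Cardinal.mk (ℕ → ℕ) := Cardinal.mk_le_of_injective hinj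
      _ = Cardinal.continuum := by
          rw [← Cardinal.power_def, Cardinal.mk_nat, Cardinal.aleph0_power_aleph0]
  · -- continuum ≤
    set g := hξinf.natEmbedding with hg
    set f : (ℕ → Bool) → ∀ i : ℕ, {t : Fin (m i) // ξ i = true → E i (η i) t} :=
      fun c i => if ∃ n, ((g n : ℕ) = i ∧ c n = true) then A i else B i with hf
    have key : ∀ c c' : ℕ → Bool, f c = f c' → ∀ n, c n = true → c' n = true := by
      intro c c' hfc n hcn
      by_contra hc'
      have h1 : f c (g n : ℕ) = A (g n : ℕ) := if_pos ⟨n, rfl, hcn⟩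
      have h2 : f c' (g n : ℕ) = B (g n : ℕ) := by
        apply if_neg
        rintro ⟨n', hgn', hcn'⟩
        have : g n' = g n := Subtype.ext hgn'
        have : n' = n := g.injective this
        exact hc' (this ▸ hcn')
      have : A ((g n : ℕ)) = B ((g n : ℕ)) := by
        rw [← h1, hfc, h2]
      exact hAB _ (g n).2 this
    have hinj : Function.Injective f := by
      intro c c' h
      funext n
      have h1 := key c c' h n
      have h2 := key c' c h.symm n
      by_cases hc : c n = true
      · rw [hc, h1 hc]
      · by_cases hc' : c' n = true
        · exact absurd (h2 hc') hc
        · rw [Bool.not_eq_true] at hc hc'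
          rw [hc, hc']
    calc Cardinal.continuum = Cardinal.mk (ℕ → Bool) := by
          rw [← Cardinal.power_def, Cardinal.mk_nat, Cardinal.mk_bool,
            Cardinal.two_power_aleph0]
      _ ≤ _ := Cardinal.mk_le_of_injective hinj
end

section
/- Let μ be an infinite cardinal, κ a regular uncountable cardinal with μ < κ, and α an ordinal with κ ≤ α. Let ℬ be a complete Boolean algebra containing a family of nonzero elements x_f, indexed by the finite partial functions f from α to μ, such that: x_f ≤ x_g whenever g ⊆ f; x_f ⊓ x_g = 0 whenever f(β) ≠ g(β) for some β ∈ dom(f) ∩ dom(g); and the set of all x_f is dense in ℬ (every nonzero element of ℬ lies above some x_f). Then for every ideal I on ℕ and every fast sequence m, ℬ has the (κ,I,m)-c.c. -/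
universe u v

/-- An ideal on `ℕ`: contains all finite sets, closed under subsets and finite
unions. -/
def IsIdealOnNat (I : Set (Set ℕ)) : Prop :=
  (∀ v : Set ℕ, v.Finite → v ∈ I) ∧ (∀ v ∈ I, ∀ w ⊆ v, w ∈ I) ∧
    (∀ v ∈ I, ∀ w ∈ I, v ∪ w ∈ I)

/-- A subset `S` of a complete Boolean algebra `B` is a complete subalgebra if it
contains `⊥` and is closed under complements, binary meets, and arbitrary suprema
(the latter computed in `B`; this is the meaning of `S ⋖ B`). -/
def IsCompleteSubalgebra {B : Type v} [CompleteBooleanAlgebra B] (S : Set B) : Prop :=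
  ⊥ ∈ S ∧ (∀ a ∈ S, aᶜ ∈ S) ∧ (∀ a ∈ S, ∀ b ∈ S, a ⊓ b ∈ S) ∧
    ∀ T ⊆ S, sSup T ∈ S

/-- The `κ`-c.c. for the (sub)algebra `S` of `B`: every antichain of nonzero
elements of `S` has cardinality `< κ`.  (Elements of `Set B` live in universe `v`,
so the cardinality is compared after lifting.) -/
def KappaCCOn (κ : Cardinal.{u}) {B : Type v} [CompleteBooleanAlgebra B]
    (S : Set B) : Prop :=
  ∀ A : Set B, A ⊆ S → (∀ a ∈ A, a ≠ ⊥) →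
    (A.Pairwise fun a b => a ⊓ b = ⊥) →
    Cardinal.lift.{u} (Cardinal.mk ↥A) < Cardinal.lift.{v} κ

/-- The `(κ, I, m)`-chain condition for the (sub)algebra `S` of the complete
Boolean algebra `B`.  The index set of ordinals below `κ` is represented by the
type `κ.ord.toType`. -/
def CCCOn (κ : Cardinal.{u}) (I : Set (Set ℕ)) (m : ℕ → ℕ)
    {B : Type v} [CompleteBooleanAlgebra B] (S : Set B) : Prop :=
  ∀ U₂ : Set κ.ord.ToType, Cardinal.mk ↥U₂ = κ →
    ∀ a : κ.ord.ToType → B, (∀ α ∈ U₂, a α ∈ S ∧ a α ≠ ⊥) →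
      ∃ j : ℕ, ∃ U₁ ⊆ U₂, Cardinal.mk ↥U₁ = κ ∧ ∃ A ∈ I,
        ∀ n : ℕ, n ∉ A → ∀ u : Finset κ.ord.ToType, ↑u ⊆ U₁ →
          ∀ i : ℕ, i + j < n →
            m n < u.card * mCirc m n ^ n ^ i → u.card ≤ m n →
            ∃ v ⊆ u, u.card ≤ v.card * mCirc m n ^ n ^ (i + j) ∧
              v.inf a ≠ ⊥

/-- `a` is below the projection of `b` (relative to the subalgebra `S₁`):
every nonzero `c ∈ S₁` with `c ≤ a` satisfies `c ⊓ b ≠ ⊥`. -/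
def BelowProj {B : Type v} [CompleteBooleanAlgebra B] (S₁ : Set B) (a b : B) :
    Prop :=
  ∀ c ∈ S₁, c ≠ ⊥ → c ≤ a → c ⊓ b ≠ ⊥

/-- The pair `(S₁, S₂)` of subalgebras of `B` has the `(κ, I, m)`-pattern
transfer property. -/
def PatternTransfer (κ : Cardinal.{u}) (I : Set (Set ℕ)) (m : ℕ → ℕ)
    {B : Type v} [CompleteBooleanAlgebra B] (S₁ S₂ : Set B) : Prop :=
  IsCompleteSubalgebra S₁ ∧ IsCompleteSubalgebra S₂ ∧ S₁ ⊆ S₂ ∧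
  KappaCCOn κ S₁ ∧
  ∀ U₂ : Set κ.ord.ToType, Cardinal.mk ↥U₂ = κ →
    ∀ a2 : κ.ord.ToType → B, (∀ α ∈ U₂, a2 α ∈ S₂ ∧ a2 α ≠ ⊥) →
      (∀ α ∈ U₂, ∀ β ∈ U₂, a2 α = a2 β → α = β) →
      ∃ j : ℕ, ∃ U₁ ⊆ U₂, Cardinal.mk ↥U₁ = κ ∧ ∃ A ∈ I,
        ∃ a1 : κ.ord.ToType → B,
          (∀ α ∈ U₁, a1 α ∈ S₁ ∧ a1 α ≠ ⊥ ∧ BelowProj S₁ (a1 α) (a2 α)) ∧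
          ∀ n : ℕ, n ∉ A → ∀ i : ℕ, i + j < n →
            ∀ u : Finset κ.ord.ToType, ↑u ⊆ U₁ →
              m n < u.card * mCirc m n ^ n ^ i → u.card < m n →
              ∀ a ∈ S₁, a ≠ ⊥ → a ≤ u.inf a1 →
                ∃ v ⊆ u, u.card ≤ v.card * mCirc m n ^ n ^ (i + j) ∧
                  v.inf a2 ⊓ a ≠ ⊥

/-- `Valid μ α s f`: the finite partial function with domain `s` and values given
by `f` is a finite partial function from `α` to `μ`. -/
def ValidPF (μ : Cardinal.{u}) (α : Ordinal.{u}) (s : Finset Ordinal.{u})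
    (f : Ordinal.{u} → Ordinal.{u}) : Prop :=
  ∀ β ∈ s, β < α ∧ f β < μ.ord

/-!
Below each `a α` pick a basic element `x s_α f_α`. A Δ-system argument, using that `κ` is
regular uncountable and that the partial functions take fewer than `κ` values, thins the
family out to `κ` many pairwise compatible `f_α`. Any finitely many of them have a common
extension `g`, and `x _ g` is a nonzero lower bound of the corresponding `a α`. So `B` has
precaliber `κ`, and then the `(κ, I, m)`-c.c. holds trivially with `j = 0`, `A = ∅`, `v = u`.
-/

open Cardinal Set Function

universe w w'

section DeltaSystem

variable {ι Y : Type u} {γ : Type w} {δ : Type w'} {κ : Cardinal.{u}}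

theorem exists_mk_sep_eq_of_isRegular (hreg : κ.IsRegular) {S : Set ι} (hS : #S = κ)
    (h : ι → δ) (e : Y → δ) (hY : #Y < κ) (hSe : ∀ t ∈ S, h t ∈ range e) :
    ∃ y, #{t ∈ S | h t = y} = κ := by
  by_contra! hfib
  have hcover : S ⊆ ⋃ y, {t ∈ S | h t = e y} := fun t ht => by
    obtain ⟨y, hy⟩ := hSe t ht
    exact mem_iUnion.2 ⟨y, ht, hy.symm⟩
  have hsmall : #(⋃ y, {t ∈ S | h t = e y}) < κ :=
    (card_iUnion_lt_iff_forall_of_isRegular hreg hY).2 fun y =>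
      ((mk_le_mk_of_subset (sep_subset _ _)).trans_eq hS).lt_of_ne (hfib _)
  exact (hS ▸ mk_le_mk_of_subset hcover : κ ≤ _).not_gt hsmall

theorem mk_biUnion_finset_lt (hκ : ℵ₀ ≤ κ) (F : Finset γ) (A : γ → Set ι)
    (hA : ∀ x ∈ F, #(A x) < κ) : #(⋃ x ∈ F, A x) < κ := by
  classical
  induction F using Finset.induction_on with
  | empty => simpa using aleph0_pos.trans_le hκ
  | insert a F _ ih =>
    rw [Finset.set_biUnion_insert]
    exact (mk_union_le _ _).trans_lt <| add_lt_of_lt hκ (hA a (F.mem_insert_self a))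
      (ih fun x hx => hA x (Finset.mem_insert_of_mem hx))

theorem exists_disjoint_of_mk_lt (hreg : κ.IsRegular) {S D : Set ι} (hS : #S = κ)
    (s : ι → Finset γ) (hsmall : ∀ x, #{t ∈ S | x ∈ s t} < κ) (hD : #D < κ) :
    ∃ t ∈ S, t ∉ D ∧ ∀ d ∈ D, Disjoint (s t) (s d) := by
  set bad := D ∪ ⋃ d ∈ D, ⋃ x ∈ s d, {t ∈ S | x ∈ s t}
  have hbad : #bad < κ :=
    (mk_union_le _ _).trans_lt <| add_lt_of_lt hreg.aleph0_le hD <|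
      (card_biUnion_lt_iff_forall_of_isRegular hreg hD).2 fun d _ =>
        mk_biUnion_finset_lt hreg.aleph0_le _ _ fun x _ => hsmall x
  obtain ⟨t, htS, htbad⟩ := not_subset.1 fun h : S ⊆ bad =>
    (hS ▸ mk_le_mk_of_subset h : κ ≤ _).not_gt hbad
  refine ⟨t, htS, fun htD => htbad (Or.inl htD), fun d hd => Finset.disjoint_left.2 ?_⟩
  intro x hxt hxd
  exact htbad (Or.inr (mem_biUnion hd (mem_biUnion hxd ⟨htS, hxt⟩)))

theorem exists_pairwise_disjoint_of_mk_lt (hreg : κ.IsRegular) {S : Set ι} (hS : #S = κ)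
    (s : ι → Finset γ) (hsmall : ∀ x, #{t ∈ S | x ∈ s t} < κ) :
    ∃ D ⊆ S, #D = κ ∧ D.Pairwise (Disjoint on s) := by
  obtain ⟨D, hD⟩ := zorn_subset {D | D ⊆ S ∧ D.Pairwise (Disjoint on s)} fun c hc hchain =>
    ⟨⋃₀ c, ⟨sUnion_subset fun D hD => (hc hD).1,
      (pairwise_sUnion hchain.directedOn).2 fun D hD => (hc hD).2⟩,
      fun _ => subset_sUnion_of_mem⟩
  refine ⟨D, hD.prop.1,
    ((mk_le_mk_of_subset hD.prop.1).trans_eq hS).eq_of_not_lt fun hlt => ?_, hD.prop.2⟩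
  obtain ⟨t, htS, htD, hdisj⟩ := exists_disjoint_of_mk_lt hreg hS s hsmall hlt
  have hext : insert t D ∈ {D | D ⊆ S ∧ D.Pairwise (Disjoint on s)} :=
    ⟨insert_subset htS hD.prop.1, hD.prop.2.insert fun d hd _ => ⟨hdisj d hd, (hdisj d hd).symm⟩⟩
  exact htD (hD.2 hext (subset_insert t D) (mem_insert t D))

def PairwiseCompatibleOn (S : Set ι) (s : ι → Finset γ) (f : ι → γ → δ) : Prop :=
  ∀ t ∈ S, ∀ t' ∈ S, ∀ β ∈ s t, β ∈ s t' → f t β = f t' β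

theorem exists_pairwiseCompatibleOn_of_card_le (hreg : κ.IsRegular) (e : Y → δ) (hY : #Y < κ)
    (n : ℕ) (s : ι → Finset γ) (f : ι → γ → δ) (S : Set ι) (hS : #S = κ)
    (hcard : ∀ t ∈ S, (s t).card ≤ n) (hval : ∀ t ∈ S, ∀ β ∈ s t, f t β ∈ range e) :
    ∃ S' ⊆ S, #S' = κ ∧ PairwiseCompatibleOn S' s f := by
  classical
  induction n generalizing s S with
  | zero =>
    refine ⟨S, subset_rfl, hS, fun t ht _ _ β hβ _ => ?_⟩
    simp [Finset.card_eq_zero.1 (Nat.le_zero.1 (hcard t ht))] at hβ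
  | succ n ih =>
    by_cases hbig : ∃ x, #{t ∈ S | x ∈ s t} = κ
    · obtain ⟨x, hx⟩ := hbig
      obtain ⟨y, hy⟩ := exists_mk_sep_eq_of_isRegular hreg hx (fun t => f t x) e hY
        fun t ht => hval t ht.1 x ht.2
      obtain ⟨S', hS'sub, hS', hcompat⟩ := ih (fun t => (s t).erase x) _ hy
        (fun t ht => by simpa [Finset.card_erase_of_mem ht.1.2] using hcard t ht.1.1)
        fun t ht β hβ => hval t ht.1.1 β (Finset.mem_of_mem_erase hβ)
      refine ⟨S', fun t ht => (hS'sub ht).1.1, hS', fun t ht t' ht' β hβ hβ' => ?_⟩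
      by_cases hβx : β = x
      · subst hβx
        exact (hS'sub ht).2.trans (hS'sub ht').2.symm
      · exact hcompat t ht t' ht' β (Finset.mem_erase.2 ⟨hβx, hβ⟩)
          (Finset.mem_erase.2 ⟨hβx, hβ'⟩)
    · obtain ⟨D, hDS, hD, hdisj⟩ := exists_pairwise_disjoint_of_mk_lt hreg hS s fun x =>
        ((mk_le_mk_of_subset (sep_subset _ _)).trans_eq hS).lt_of_ne fun hx => hbig ⟨x, hx⟩
      refine ⟨D, hDS, hD, fun t ht t' ht' β hβ hβ' => ?_⟩
      obtain rfl | hne := eq_or_ne t t'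
      · rfl
      · exact absurd hβ' (Finset.disjoint_left.1 (hdisj ht ht' hne) hβ)

theorem exists_pairwiseCompatibleOn (hreg : κ.IsRegular) (hκ : ℵ₀ < κ) (e : Y → δ)
    (hY : #Y < κ) (s : ι → Finset γ) (f : ι → γ → δ) (S : Set ι) (hS : #S = κ)
    (hval : ∀ t ∈ S, ∀ β ∈ s t, f t β ∈ range e) :
    ∃ S' ⊆ S, #S' = κ ∧ PairwiseCompatibleOn S' s f := by
  obtain ⟨n, hn⟩ := exists_mk_sep_eq_of_isRegular hreg hS (fun t => (s t).card) ULift.down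
    (by simpa using hκ) fun t _ => ⟨⟨_⟩, rfl⟩
  obtain ⟨S', hS'sub, hS', hcompat⟩ :=
    exists_pairwiseCompatibleOn_of_card_le hreg e hY n s f _ hn (fun t ht => ht.2.le)
      fun t ht => hval t ht.1
  exact ⟨S', fun t ht => (hS'sub ht).1, hS', hcompat⟩

theorem PairwiseCompatibleOn.exists_extension [Nonempty δ] {s : ι → Finset γ}
    {f : ι → γ → δ} {u : Finset ι} (h : PairwiseCompatibleOn (u : Set ι) s f) :
    ∃ g : γ → δ, ∀ t ∈ u, ∀ β ∈ s t, g β = f t β := by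
  classical
  refine ⟨fun β => if hβ : ∃ t ∈ u, β ∈ s t then f hβ.choose β else Classical.arbitrary δ,
    fun t ht β hβ => ?_⟩
  have hβ' : ∃ t ∈ u, β ∈ s t := ⟨t, ht, hβ⟩
  dsimp only
  rw [dif_pos hβ']
  exact h _ hβ'.choose_spec.1 t ht β hβ'.choose_spec.2 hβ

end DeltaSystem

def HasPrecaliber (κ : Cardinal.{u}) (B : Type v) [SemilatticeInf B] [BoundedOrder B] : Prop :=
  ∀ U₂ : Set κ.ord.ToType, #U₂ = κ → ∀ a : κ.ord.ToType → B, (∀ α ∈ U₂, a α ≠ ⊥) →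
    ∃ U₁ ⊆ U₂, #U₁ = κ ∧ ∀ u : Finset κ.ord.ToType, ↑u ⊆ U₁ → u.inf a ≠ ⊥

theorem cccOn_of_hasPrecaliber {κ : Cardinal.{u}} {I : Set (Set ℕ)} (m : ℕ → ℕ)
    {B : Type v} [CompleteBooleanAlgebra B] (S : Set B) (hI : ∅ ∈ I)
    (h : HasPrecaliber κ B) : CCCOn κ I m S := by
  intro U₂ hU₂ a ha
  obtain ⟨U₁, hU₁, hcard, hcentered⟩ := h U₂ hU₂ a fun α hα => (ha α hα).2
  refine ⟨0, U₁, hU₁, hcard, ∅, hI, fun n _ u hu i _ hlt _ => ⟨u, subset_rfl, ?_, hcentered u hu⟩⟩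
  have hpos : 0 < mCirc m n ^ n ^ i := Nat.pos_of_ne_zero fun h0 => by simp [h0] at hlt
  exact Nat.le_mul_of_pos_right _ hpos

theorem hasPrecaliber_of_dense_partialFunction_family (μ κ : Cardinal.{u})
    (hreg : κ.IsRegular) (hunc : ℵ₀ < κ) (hμκ : μ < κ) (α : Ordinal.{u})
    {B : Type v} [SemilatticeInf B] [BoundedOrder B]
    (x : Finset Ordinal.{u} → (Ordinal.{u} → Ordinal.{u}) → B)
    (hne : ∀ s f, ValidPF μ α s f → x s f ≠ ⊥)
    (hmono : ∀ s f s' f', ValidPF μ α s f → ValidPF μ α s' f' → s' ⊆ s →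
      (∀ β ∈ s', f' β = f β) → x s f ≤ x s' f')
    (hdense : ∀ b : B, b ≠ ⊥ → ∃ s f, ValidPF μ α s f ∧ x s f ≤ b) :
    HasPrecaliber κ B := by
  classical
  intro U₂ hU₂ a ha
  choose! s f hvalid hle using fun t (ht : t ∈ U₂) => hdense (a t) (ha t ht)
  have hval : ∀ t ∈ U₂, ∀ β ∈ s t, f t β ∈ range fun y => (Ordinal.ToType.mk.symm y).1 :=
    fun t ht β hβ => ⟨Ordinal.ToType.mk ⟨f t β, (hvalid t ht β hβ).2⟩, by simp⟩
  obtain ⟨U₁, hU₁, hcard, hcompat⟩ := exists_pairwiseCompatibleOn hreg hunc _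
    (by rwa [mk_toType, card_ord]) s f U₂ hU₂ hval
  refine ⟨U₁, hU₁, hcard, fun u hu => ?_⟩
  obtain ⟨g, hg⟩ := PairwiseCompatibleOn.exists_extension
    fun t ht t' ht' => hcompat t (hu ht) t' (hu ht')
  have hvalid_g : ValidPF μ α (u.biUnion s) g := fun β hβ => by
    obtain ⟨t, ht, hβt⟩ := Finset.mem_biUnion.1 hβ
    simpa only [hg t ht β hβt] using hvalid t (hU₁ (hu ht)) β hβt
  have hbelow : x (u.biUnion s) g ≤ u.inf a := Finset.le_inf fun t ht =>
    (hmono _ _ _ _ hvalid_g (hvalid t (hU₁ (hu ht))) (Finset.subset_biUnion_of_mem s ht)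
      fun β hβ => (hg t ht β hβ).symm).trans (hle t (hU₁ (hu ht)))
  exact fun hbot => hne _ _ hvalid_g (le_bot_iff.1 (hbot ▸ hbelow))

theorem free_boolean_algebra_ccc_general (μ κ : Cardinal.{u})
    (hreg : κ.IsRegular) (hunc : Cardinal.aleph0 < κ) (hμκ : μ < κ)
    (α : Ordinal.{u})
    {B : Type u} [CompleteBooleanAlgebra B]
    (x : Finset Ordinal.{u} → (Ordinal.{u} → Ordinal.{u}) → B)
    (hne : ∀ s f, ValidPF μ α s f → x s f ≠ ⊥)
    (hmono : ∀ s f s' f', ValidPF μ α s f → ValidPF μ α s' f' → s' ⊆ s →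
      (∀ β ∈ s', f' β = f β) → x s f ≤ x s' f')
    (hdense : ∀ b : B, b ≠ ⊥ → ∃ s f, ValidPF μ α s f ∧ x s f ≤ b)
    (I : Set (Set ℕ)) (hI : IsIdealOnNat I) (m : ℕ → ℕ) :
    CCCOn κ I m (Set.univ : Set B) :=
  cccOn_of_hasPrecaliber m _ (hI.1 ∅ finite_empty)
    (hasPrecaliber_of_dense_partialFunction_family μ κ hreg hunc hμκ α x hne hmono hdense)

/-- (Claim 8.4.)  Let `μ` be infinite, `κ` regular uncountable with `μ < κ ≤ α`.
If the complete Boolean algebra `B` contains a family `x s f` of nonzero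
elements indexed by the finite partial functions from `α` to `μ` (monotone,
pairwise disjoint when incompatible, and dense in `B` — i.e. `B` is the
completion of the free Boolean algebra generated by `α` independent partitions
each of size `μ`), then `B` has the `(κ, I, m)`-c.c. for every ideal `I` on `ℕ`
and every fast sequence `m`. -/
theorem free_boolean_algebra_ccc (μ κ : Cardinal.{u}) (hμ : Cardinal.aleph0 ≤ μ)
    (hreg : κ.IsRegular) (hunc : Cardinal.aleph0 < κ) (hμκ : μ < κ)
    (α : Ordinal.{u}) (hκα : κ.ord ≤ α)
    {B : Type u} [CompleteBooleanAlgebra B]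
    (x : Finset Ordinal.{u} → (Ordinal.{u} → Ordinal.{u}) → B)
    (hne : ∀ s f, ValidPF μ α s f → x s f ≠ ⊥)
    (hmono : ∀ s f s' f', ValidPF μ α s f → ValidPF μ α s' f' → s' ⊆ s →
      (∀ β ∈ s', f' β = f β) → x s f ≤ x s' f')
    (hdisj : ∀ s f s' f', ValidPF μ α s f → ValidPF μ α s' f' →
      (∃ β ∈ s ∩ s', f β ≠ f' β) → x s f ⊓ x s' f' = ⊥)
    (hdense : ∀ b : B, b ≠ ⊥ → ∃ s f, ValidPF μ α s f ∧ x s f ≤ b)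
    (I : Set (Set ℕ)) (hI : IsIdealOnNat I) (m : ℕ → ℕ) (hm : FastSeq m) :
    CCCOn κ I m (Set.univ : Set B) :=
  free_boolean_algebra_ccc_general μ κ hreg hunc hμκ α x hne hmono hdense I hI m
end

section
/- Let κ be a regular uncountable cardinal and α an ordinal. For β < α let rm_κ(β) denote the unique ordinal i < κ such that β = κ·γ + i for some ordinal γ. Let ℬ be a complete Boolean algebra containing a family of nonzero elements x_f, indexed by the finite partial functions f on α satisfying f(β) < rm_κ(β) for every β ∈ dom(f), such that: x_f ≤ x_g whenever g ⊆ f; x_f ⊓ x_g = 0 whenever f(β) ≠ g(β) for some β ∈ dom(f) ∩ dom(g); and the set of all x_f is dense in ℬ. Then ℬ satisfies the κ-c.c., and indeed the (κ,I,m)-c.c. for every ideal I on ℕ and every fast sequence m. -/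
universe u v

/-- `ValidPF' κ α s f`: the finite partial function with domain `s ⊆ α` and
values given by `f` satisfies `f β < rm_κ(β)` for every `β` in the domain, where
`rm_κ(β) = β % κ.ord` is the remainder of `β` modulo `κ`. -/
def ValidPF' (κ : Cardinal.{u}) (α : Ordinal.{u}) (s : Finset Ordinal.{u})
    (f : Ordinal.{u} → Ordinal.{u}) : Prop :=
  ∀ β ∈ s, β < α ∧ f β < β % κ.ord

/-! Choose for each member `a t` of a `κ`-sized family a condition `x (S t) (F t) ≤ a t`.
Induction on `|S t|` gives `κ` many pairwise compatible conditions: either some `β` lies in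
`κ` many domains, and regularity fixes the value at `β` (there are `< κ` of them, as
`F t β < rm_κ(β) < κ`) before `β` is discarded, or no point does, and then a maximal pairwise
disjoint subfamily already has size `κ`. Finitely many compatible conditions glue to one
condition below all their `a t`, so `κ` is a precaliber of `B`. This gives the `κ`-c.c. at
once, and the `(κ, I, m)`-c.c. with `j = 0`, `A = ∅` and `v = u`. -/

universe w

open Cardinal Set

namespace Cardinal

variable {κ : Cardinal.{u}} {T : Type u}

theorem exists_large_subset_map_eq (hκ : κ.IsRegular) {Y : Type v} {U : Set T} (hU : κ ≤ #U)
    (f : T → Y) {C : Set Y} (hC : lift.{u} #C < lift.{v} κ) (hf : ∀ i ∈ U, f i ∈ C) :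
    ∃ V ⊆ U, κ ≤ #V ∧ ∃ y, ∀ i ∈ V, f i = y := by
  obtain ⟨e⟩ : Nonempty (C ↪ κ.ord.ToType) := lift_mk_le'.1 (by simpa using hC.le)
  have hrange : #(range e) < κ :=
    lift_lt.1 ((mk_range_eq_of_injective e.injective).trans_lt hC)
  obtain ⟨c, V, hVU, hV, hc⟩ := infinite_pigeonhole_set
    (fun i : U => (⟨e ⟨f i, hf i i.2⟩, mem_range_self _⟩ : range e)) κ hU hκ.aleph0_le
    (by rwa [hκ.cof_ord])
  obtain ⟨y, hy⟩ := c.2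
  refine ⟨V, hVU, hV, y, fun i hi => ?_⟩
  exact congrArg Subtype.val (e.injective ((congrArg Subtype.val (hc hi)).trans hy.symm))

theorem mk_biUnion_finset_lt (hκ : ℵ₀ ≤ κ) {X : Type v} (s : Finset X) (G : X → Set T)
    (hG : ∀ x ∈ s, #(G x) < κ) : #(⋃ x ∈ s, G x) < κ := by
  classical
  induction s using Finset.induction_on with
  | empty => simpa using aleph0_pos.trans_le hκ
  | insert a s _ ih =>
    rw [Finset.set_biUnion_insert]
    exact (mk_union_le _ _).trans_lt <| add_lt_of_lt hκ (hG a (Finset.mem_insert_self _ _))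
      (ih fun y hy => hG y (Finset.mem_insert_of_mem hy))

theorem exists_large_pairwiseDisjoint (hκ : κ.IsRegular) {X : Type v} [DecidableEq X]
    (s : T → Finset X) {U : Set T} (hU : κ ≤ #U) (hs : ∀ x, #{i ∈ U | x ∈ s i} < κ) :
    ∃ V ⊆ U, κ ≤ #V ∧ V.PairwiseDisjoint s := by
  obtain ⟨M, hM⟩ := zorn_subset {V | V ⊆ U ∧ V.PairwiseDisjoint s} fun c hc hchain =>
    ⟨⋃₀ c, ⟨sUnion_subset fun V hV => (hc hV).1,
      (hchain.pairwiseDisjoint_sUnion s).2 fun V hV => (hc hV).2⟩,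
      fun _ => subset_sUnion_of_mem⟩
  refine ⟨M, hM.prop.1, not_lt.1 fun hMκ => ?_, hM.prop.2⟩
  -- every `j` meeting no member of `M` could be added to `M`
  let Bad := ⋃ i : M, ⋃ x ∈ s i, {j | j ∈ U ∧ x ∈ s j}
  have hBad : #Bad < κ := mk_iUnion_le_sum_mk.trans_lt <| sum_lt_of_isRegular hκ hMκ
    fun i => mk_biUnion_finset_lt hκ.aleph0_le _ _ fun x _ => hs x
  obtain ⟨j, hjU, hj⟩ := not_subset.1 fun hU' : U ⊆ M ∪ Bad =>
    (hU.trans (mk_le_mk_of_subset hU')).not_gt <|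
      (mk_union_le _ _).trans_lt (add_lt_of_lt hκ.aleph0_le hMκ hBad)
  have hdisj : ∀ i ∈ M, j ≠ i → Disjoint (s j) (s i) := fun i hi _ =>
    Finset.disjoint_left.2 fun x hxj hxi =>
      hj (Or.inr (mem_iUnion.2 ⟨⟨i, hi⟩, mem_iUnion₂.2 ⟨x, hxi, hjU, hxj⟩⟩))
  exact hj (Or.inl (hM.mem_of_prop_insert ⟨insert_subset hjU hM.prop.1, hM.prop.2.insert hdisj⟩))

theorem exists_large_pairwise_compatible_of_card_le (hκ : κ.IsRegular) {X : Type v} {Y : Type w}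
    [DecidableEq X] (F : T → X → Y) {C : X → Set Y} (hC : ∀ x, lift.{u} #(C x) < lift.{w} κ)
    (n : ℕ) (s : T → Finset X) {U : Set T} (hU : κ ≤ #U) (hs : ∀ i ∈ U, (s i).card ≤ n)
    (hF : ∀ i ∈ U, ∀ x ∈ s i, F i x ∈ C x) :
    ∃ V ⊆ U, κ ≤ #V ∧ ∀ i ∈ V, ∀ j ∈ V, ∀ x ∈ s i ∩ s j, F i x = F j x := by
  induction n generalizing s U with
  | zero =>
    refine ⟨U, subset_rfl, hU, fun i hi j _ x hx => ?_⟩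
    simp [Finset.card_eq_zero.1 (Nat.le_zero.1 (hs i hi))] at hx
  | succ n ih =>
    by_cases hx : ∃ x, κ ≤ #{i | i ∈ U ∧ x ∈ s i}
    · obtain ⟨x, hx⟩ := hx
      obtain ⟨U₁, hU₁, hU₁κ, y, hy⟩ :=
        exists_large_subset_map_eq hκ hx (F · x) (hC x) fun i hi => hF i hi.1 x hi.2
      obtain ⟨V, hVU₁, hVκ, hV⟩ := ih (fun i => (s i).erase x) hU₁κ
        (fun i hi => by
          rw [Finset.card_erase_of_mem (hU₁ hi).2]
          exact Nat.sub_le_of_le_add (hs i (hU₁ hi).1))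
        (fun i hi z hz => hF i (hU₁ hi).1 z (Finset.mem_of_mem_erase hz))
      refine ⟨V, fun i hi => (hU₁ (hVU₁ hi)).1, hVκ, fun i hi j hj z hz => ?_⟩
      by_cases hzx : z = x
      · rw [hzx, hy i (hVU₁ hi), hy j (hVU₁ hj)]
      · exact hV i hi j hj z (by simpa [hzx] using hz)
    · push Not at hx
      obtain ⟨V, hVU, hVκ, hV⟩ := exists_large_pairwiseDisjoint hκ s hU hx
      refine ⟨V, hVU, hVκ, fun i hi j hj z hz => ?_⟩
      obtain rfl | hij := eq_or_ne i j
      · rfl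
      · rw [Finset.mem_inter] at hz
        exact (Finset.disjoint_left.1 (hV hi hj hij) hz.1 hz.2).elim

theorem exists_large_pairwise_compatible (hκ : κ.IsRegular) (hκ₀ : ℵ₀ < κ) {X : Type v}
    {Y : Type w} [DecidableEq X] (F : T → X → Y) {C : X → Set Y}
    (hC : ∀ x, lift.{u} #(C x) < lift.{w} κ) (s : T → Finset X) {U : Set T} (hU : κ ≤ #U)
    (hF : ∀ i ∈ U, ∀ x ∈ s i, F i x ∈ C x) :
    ∃ V ⊆ U, κ ≤ #V ∧ ∀ i ∈ V, ∀ j ∈ V, ∀ x ∈ s i ∩ s j, F i x = F j x := by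
  obtain ⟨U₁, hU₁, hU₁κ, n, hn⟩ := exists_large_subset_map_eq hκ hU (fun i => (s i).card)
    (C := Set.univ) (by simpa using hκ₀) fun _ _ => mem_univ _
  obtain ⟨V, hVU₁, hVκ, hV⟩ := exists_large_pairwise_compatible_of_card_le hκ F hC n s hU₁κ
    (fun i hi => (hn i hi).le) fun i hi => hF i (hU₁ hi)
  exact ⟨V, hVU₁.trans hU₁, hVκ, hV⟩

end Cardinal

theorem Finset.exists_extends_of_pairwise_compatible {ι X Y : Type*} [DecidableEq X] [Nonempty Y]
    (u : Finset ι) (s : ι → Finset X) (F : ι → X → Y)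
    (h : ∀ i ∈ u, ∀ j ∈ u, ∀ x ∈ s i ∩ s j, F i x = F j x) :
    ∃ f : X → Y, ∀ i ∈ u, ∀ x ∈ s i, f x = F i x := by
  classical
  refine ⟨fun x => if hx : ∃ i ∈ u, x ∈ s i then F hx.choose x else Classical.arbitrary Y,
    fun i hi x hx => ?_⟩
  have hx' : ∃ i ∈ u, x ∈ s i := ⟨i, hi, hx⟩
  dsimp only
  rw [dif_pos hx']
  exact h _ hx'.choose_spec.1 i hi x (Finset.mem_inter.2 ⟨hx'.choose_spec.2, hx⟩)

def IsPrecaliber (κ : Cardinal.{u}) (B : Type v) [SemilatticeInf B] [BoundedOrder B] : Prop :=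
  ∀ {T : Type u} (a : T → B) {U : Set T}, κ ≤ #U → (∀ t ∈ U, a t ≠ ⊥) →
    ∃ V ⊆ U, κ ≤ #V ∧ ∀ u : Finset T, ↑u ⊆ V → u.inf a ≠ ⊥

theorem isPrecaliber_of_dense_validPF {κ : Cardinal.{u}} (hκ : κ.IsRegular) (hκ₀ : ℵ₀ < κ)
    {α : Ordinal.{u}} {B : Type v} [SemilatticeInf B] [BoundedOrder B]
    {x : Finset Ordinal.{u} → (Ordinal.{u} → Ordinal.{u}) → B}
    (hne : ∀ s f, ValidPF' κ α s f → x s f ≠ ⊥)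
    (hmono : ∀ s f s' f', ValidPF' κ α s f → ValidPF' κ α s' f' → s' ⊆ s →
      (∀ β ∈ s', f' β = f β) → x s f ≤ x s' f')
    (hdense : ∀ b : B, b ≠ ⊥ → ∃ s f, ValidPF' κ α s f ∧ x s f ≤ b) :
    IsPrecaliber κ B := by
  intro T a U hU ha
  choose! S F hSF using fun t (ht : t ∈ U) => hdense (a t) (ha t ht)
  have hC (β : Ordinal.{u}) : lift.{u} #(Iio (β % κ.ord)) < lift.{u + 1} κ := by
    rw [mk_Iio_ordinal, lift_lift, lift_lt]
    exact lt_ord.1 (Ordinal.mod_lt β (ord_pos.2 hκ.pos).ne')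
  obtain ⟨V, hVU, hVκ, hV⟩ := exists_large_pairwise_compatible hκ hκ₀ F hC S hU
    fun t ht β hβ => ((hSF t ht).1 β hβ).2
  refine ⟨V, hVU, hVκ, fun u hu => ?_⟩
  obtain ⟨f, hf⟩ := u.exists_extends_of_pairwise_compatible S F
    fun i hi j hj => hV i (hu hi) j (hu hj)
  have hvalid : ValidPF' κ α (u.biUnion S) f := by
    intro β hβ
    obtain ⟨t, ht, hβt⟩ := Finset.mem_biUnion.1 hβ
    rw [hf t ht β hβt]
    exact (hSF t (hVU (hu ht))).1 β hβt
  refine ne_bot_of_le_ne_bot (hne _ _ hvalid) (Finset.le_inf fun t ht => ?_)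
  have hSFt := hSF t (hVU (hu ht))
  exact (hmono _ _ _ _ hvalid hSFt.1 (Finset.subset_biUnion_of_mem S ht)
    fun β hβ => (hf t ht β hβ).symm).trans hSFt.2

theorem FastSeq.mCirc_pos {m : ℕ → ℕ} (hm : FastSeq m) (n : ℕ) : 0 < mCirc m n := by
  have hpos (a : ℕ) : 0 < a ^ (4 * a) := by
    rcases a.eq_zero_or_pos with rfl | ha
    · simp
    · positivity
  exact Finset.prod_pos fun j _ => (hpos _).trans_le (hm.2 j)

namespace IsPrecaliber

variable {κ : Cardinal.{u}} {B : Type v} [CompleteBooleanAlgebra B]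

theorem kappaCCOn_univ (h : IsPrecaliber κ B) (hκ : ℵ₀ ≤ κ) :
    KappaCCOn κ (Set.univ : Set B) := by
  classical
  intro A _ hA hpair
  by_contra! hAκ
  obtain ⟨e⟩ : Nonempty (κ.ord.ToType ↪ A) := lift_mk_le'.1 (by simpa using hAκ)
  obtain ⟨V, -, hVκ, hV⟩ := h (fun t => (e t : B)) (U := Set.univ) (by simp)
    fun t _ => hA _ (e t).2
  obtain ⟨t₁, h₁, t₂, h₂, ht⟩ := (infinite_coe_iff.1 (infinite_iff.2 (hκ.trans hVκ))).nontrivial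
  refine hV {t₁, t₂} (by simp [insert_subset_iff, h₁, h₂]) ?_
  rw [Finset.inf_insert, Finset.inf_singleton]
  exact hpair (e t₁).2 (e t₂).2 fun h => ht (e.injective (Subtype.ext h))

theorem cccOn_univ (h : IsPrecaliber κ B) {I : Set (Set ℕ)} (hI : IsIdealOnNat I) {m : ℕ → ℕ}
    (hm : FastSeq m) : CCCOn κ I m (Set.univ : Set B) := by
  intro U₂ hU₂ a ha
  obtain ⟨U₁, hU₁, hU₁κ, hcentered⟩ := h a hU₂.ge fun t ht => (ha t ht).2
  refine ⟨0, U₁, hU₁, ((mk_le_mk_of_subset hU₁).trans hU₂.le).antisymm hU₁κ, ∅,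
    hI.1 ∅ finite_empty, fun n _ u hu i _ _ _ => ⟨u, subset_rfl, ?_, hcentered u hu⟩⟩
  exact Nat.le_mul_of_pos_right _ (pow_pos (hm.mCirc_pos n) _)

end IsPrecaliber

theorem boolean_algebra_lt_kappa_ccc_general (κ : Cardinal.{u})
    (hreg : κ.IsRegular) (hunc : Cardinal.aleph0 < κ) (α : Ordinal.{u})
    {B : Type u} [CompleteBooleanAlgebra B]
    (x : Finset Ordinal.{u} → (Ordinal.{u} → Ordinal.{u}) → B)
    (hne : ∀ s f, ValidPF' κ α s f → x s f ≠ ⊥)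
    (hmono : ∀ s f s' f', ValidPF' κ α s f → ValidPF' κ α s' f' → s' ⊆ s →
      (∀ β ∈ s', f' β = f β) → x s f ≤ x s' f')
    (hdense : ∀ b : B, b ≠ ⊥ → ∃ s f, ValidPF' κ α s f ∧ x s f ≤ b) :
    KappaCCOn κ (Set.univ : Set B) ∧
    ∀ I : Set (Set ℕ), IsIdealOnNat I → ∀ m : ℕ → ℕ, FastSeq m →
      CCCOn κ I m (Set.univ : Set B) := by
  have h : IsPrecaliber κ B := isPrecaliber_of_dense_validPF hreg hunc hne hmono hdense
  exact ⟨h.kappaCCOn_univ hreg.aleph0_le, fun I hI m hm => h.cccOn_univ hI hm⟩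

/-- (Claim 8.8.)  Let `κ` be regular uncountable and `α` an ordinal.  If the
complete Boolean algebra `B` contains a family `x s f` of nonzero elements
indexed by the finite partial functions `f` on `α` with `f β < rm_κ(β)`
(monotone, pairwise disjoint when incompatible, and dense in `B`), then `B`
satisfies the `κ`-c.c., and indeed the `(κ, I, m)`-c.c. for every ideal `I`
on `ℕ` and every fast sequence `m`. -/
theorem boolean_algebra_lt_kappa_ccc (κ : Cardinal.{u})
    (hreg : κ.IsRegular) (hunc : Cardinal.aleph0 < κ) (α : Ordinal.{u})
    {B : Type u} [CompleteBooleanAlgebra B]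
    (x : Finset Ordinal.{u} → (Ordinal.{u} → Ordinal.{u}) → B)
    (hne : ∀ s f, ValidPF' κ α s f → x s f ≠ ⊥)
    (hmono : ∀ s f s' f', ValidPF' κ α s f → ValidPF' κ α s' f' → s' ⊆ s →
      (∀ β ∈ s', f' β = f β) → x s f ≤ x s' f')
    (hdisj : ∀ s f s' f', ValidPF' κ α s f → ValidPF' κ α s' f' →
      (∃ β ∈ s ∩ s', f β ≠ f' β) → x s f ⊓ x s' f' = ⊥)
    (hdense : ∀ b : B, b ≠ ⊥ → ∃ s f, ValidPF' κ α s f ∧ x s f ≤ b) :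
    KappaCCOn κ (Set.univ : Set B) ∧
    ∀ I : Set (Set ℕ), IsIdealOnNat I → ∀ m : ℕ → ℕ, FastSeq m →
      CCCOn κ I m (Set.univ : Set B) :=
  boolean_algebra_lt_kappa_ccc_general κ hreg hunc α x hne hmono hdense
end

section
/- Let κ be a regular uncountable cardinal, I an ideal on ℕ, and m a fast sequence. If ℬ₁ ⋖ ℬ₂ ⋖ ℬ₃ are complete Boolean algebras and both pairs (ℬ₁,ℬ₂) and (ℬ₂,ℬ₃) have the (κ,I,m)-pattern transfer property, then the pair (ℬ₁,ℬ₃) has the (κ,I,m)-pattern transfer property. -/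
universe u v

/-!
Given distinct `a₃(α) ∈ ℬ₃`, pattern transfer for `(ℬ₂,ℬ₃)` yields `a₂(α) ∈ ℬ₂` on a set of size
`κ`. If `κ` many of the `a₂(α)` coincide with some `b`, a single element of `ℬ₁` below the
projection of `b` serves for all of them. Otherwise, by regularity of `κ`, `a₂` is injective on a
set of size `κ`, pattern transfer for `(ℬ₁,ℬ₂)` applies to it, and the two transfers compose: the
subset `v` found in `ℬ₂` is again large enough for the `(ℬ₂,ℬ₃)` transfer at level `i + j₁ + 1`,
which costs `j₁ + j₂ + 2` levels in total since `C^(n^a) · C^(n^b) ≤ C^(n^(b+1))` for `a ≤ b`.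
-/

open Cardinal Set

theorem Cardinal.exists_mk_fiber_eq_or_exists_injOn {α : Type u} {β : Type*} {κ : Cardinal.{u}}
    (hκ : κ.IsRegular) {U : Set α} (hU : #U = κ) (f : α → β) :
    (∃ x ∈ U, #{y ∈ U | f y = f x} = κ) ∨ ∃ V ⊆ U, #V = κ ∧ InjOn f V := by
  by_cases hfiber : ∃ x ∈ U, #{y ∈ U | f y = f x} = κ
  · exact .inl hfiber
  push Not at hfiber
  obtain ⟨V, hVU, hV⟩ := exists_subset_bijOn U f
  refine .inr ⟨V, hVU, le_antisymm (hU ▸ mk_le_mk_of_subset hVU) (not_lt.1 fun hVκ => ?_),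
    hV.injOn⟩
  have hcover : U ⊆ ⋃ v : V, {y ∈ U | f y = f v} := fun y hy => by
    obtain ⟨v, hv, hvy⟩ := hV.surjOn (mem_image_of_mem f hy)
    exact mem_iUnion.2 ⟨⟨v, hv⟩, hy, hvy.symm⟩
  have hUκ : #U < κ := (mk_le_mk_of_subset hcover).trans_lt <|
    (card_iUnion_lt_iff_forall_of_isRegular hκ hVκ).2 fun v =>
      (hU ▸ mk_le_mk_of_subset (sep_subset _ _)).lt_of_ne (hfiber v (hVU v.2))
  exact hUκ.ne hU

theorem Nat.mul_pow_pow_le_of_le_mul_pow_pow {x y C n a b c : ℕ} (hn : 2 ≤ n) (hab : a ≤ b)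
    (hbc : b < c) (h : x ≤ y * C ^ n ^ b) : x * C ^ n ^ a ≤ y * C ^ n ^ c := by
  have hexp : n ^ b + n ^ a ≤ n ^ c :=
    calc n ^ b + n ^ a ≤ n ^ b * 2 := by
          have := Nat.pow_le_pow_right (by omega : 0 < n) hab
          omega
      _ ≤ n ^ b * n := Nat.mul_le_mul_left _ hn
      _ = n ^ (b + 1) := (pow_succ n b).symm
      _ ≤ n ^ c := Nat.pow_le_pow_right (by omega) hbc
  have hC : C ^ (n ^ b + n ^ a) ≤ C ^ n ^ c := by
    rcases Nat.eq_zero_or_pos C with rfl | hC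
    · rw [zero_pow (by positivity), zero_pow (pow_pos (by omega : 0 < n) c).ne']
    · exact Nat.pow_le_pow_right hC hexp
  calc x * C ^ n ^ a ≤ y * C ^ n ^ b * C ^ n ^ a := Nat.mul_le_mul_right _ h
    _ = y * C ^ (n ^ b + n ^ a) := by ring
    _ ≤ y * C ^ n ^ c := Nat.mul_le_mul_left _ hC

variable {B : Type v} [CompleteBooleanAlgebra B]

namespace IsCompleteSubalgebra

variable {S : Set B}

theorem infClosed (hS : IsCompleteSubalgebra S) : InfClosed S :=
  fun a ha b hb => hS.2.2.1 a ha b hb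

theorem top_mem (hS : IsCompleteSubalgebra S) : ⊤ ∈ S := by simpa using hS.2.1 ⊥ hS.1

theorem finsetInf_mem (hS : IsCompleteSubalgebra S) {ι : Type*} {u : Finset ι} {f : ι → B}
    (hf : ∀ x ∈ u, f x ∈ S) : u.inf f ∈ S :=
  Finset.inf_induction hS.top_mem (fun _ ha _ hb => hS.infClosed ha hb) hf

theorem sInf_mem (hS : IsCompleteSubalgebra S) {T : Set B} (hT : T ⊆ S) : sInf T ∈ S := by
  rw [← compl_compl (sInf T), compl_sInf, ← sSup_image]
  exact hS.2.1 _ (hS.2.2.2 _ (image_subset_iff.2 fun t ht => hS.2.1 t (hT ht)))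

end IsCompleteSubalgebra

theorem exists_belowProj {S : Set B} (hS : IsCompleteSubalgebra S) {b : B} (hb : b ≠ ⊥) :
    ∃ p ∈ S, p ≠ ⊥ ∧ BelowProj S p b := by
  have hbp : b ≤ sInf {c ∈ S | b ≤ c} := le_sInf fun c hc => hc.2
  refine ⟨_, hS.sInf_mem (sep_subset _ _), fun hp => hb (le_bot_iff.1 (hp ▸ hbp)), ?_⟩
  intro c hc hc0 hcp hcb
  have hcc : c ≤ cᶜ :=
    hcp.trans (sInf_le ⟨hS.2.1 c hc, le_compl_iff_disjoint_left.2 (disjoint_iff.2 hcb)⟩)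
  exact hc0 (by simpa using hcc)

theorem BelowProj.trans {S₁ S₂ : Set B} (hS₂ : InfClosed S₂) (h12 : S₁ ⊆ S₂) {p q t : B}
    (hq : q ∈ S₂) (hpq : BelowProj S₁ p q) (hqt : BelowProj S₂ q t) : BelowProj S₁ p t :=
  fun c hc hc0 hcp hct => hqt (c ⊓ q) (hS₂ (h12 hc) hq) (hpq c hc hc0 hcp) inf_le_right <|
    le_bot_iff.1 (hct ▸ inf_le_inf_right t inf_le_left)

/-- The conclusion of `PatternTransfer` for the family `a2` on `U`, once `j`, `A`, `a1` are
chosen. -/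
def PatternTransferWitness (m : ℕ → ℕ) {ι : Type*} (S₁ : Set B) (U : Set ι) (j : ℕ)
    (A : Set ℕ) (a1 a2 : ι → B) : Prop :=
  (∀ α ∈ U, a1 α ∈ S₁ ∧ a1 α ≠ ⊥ ∧ BelowProj S₁ (a1 α) (a2 α)) ∧
    ∀ n : ℕ, n ∉ A → ∀ i : ℕ, i + j < n →
      ∀ u : Finset ι, ↑u ⊆ U →
        m n < u.card * mCirc m n ^ n ^ i → u.card < m n →
        ∀ a ∈ S₁, a ≠ ⊥ → a ≤ u.inf a1 →
          ∃ v ⊆ u, u.card ≤ v.card * mCirc m n ^ n ^ (i + j) ∧ v.inf a2 ⊓ a ≠ ⊥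

namespace PatternTransferWitness

variable {m : ℕ → ℕ} {ι : Type*} {S₁ S₂ : Set B} {U : Set ι} {j₁ j₂ : ℕ} {A₁ A₂ : Set ℕ}
  {a1 a2 a3 : ι → B}

theorem of_const (hS₂ : InfClosed S₂) (h12 : S₁ ⊆ S₂) {F : Set ι} (hFU : F ⊆ U) {b p : B}
    (hb : b ∈ S₂) (hFb : ∀ α ∈ F, a2 α = b) (hp : p ∈ S₁) (hp0 : p ≠ ⊥)
    (hpb : BelowProj S₁ p b) (h : PatternTransferWitness m S₂ U j₂ A₂ a2 a3) :
    PatternTransferWitness m S₁ F j₂ A₂ (fun _ => p) a3 := by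
  refine ⟨fun α hα => ⟨hp, hp0, hpb.trans hS₂ h12 hb ?_⟩,
    fun n hn i hi u hu hlt hcard a ha ha0 hap => ?_⟩
  · exact hFb α hα ▸ (h.1 α (hFU hα)).2.2
  have hu0 : u.Nonempty := Finset.card_pos.1 (Nat.pos_of_ne_zero fun h0 => by simp [h0] at hlt)
  have hab : a ⊓ b ≠ ⊥ := hpb a ha ha0 (hap.trans_eq (Finset.inf_const hu0 p))
  have hab2 : a ⊓ b ≤ u.inf a2 :=
    Finset.le_inf fun α hα => (hFb α (hu hα)).symm ▸ inf_le_right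
  obtain ⟨v, hvu, hv, hva⟩ :=
    h.2 n hn i hi u (hu.trans hFU) hlt hcard _ (hS₂ (h12 ha) hb) hab hab2
  exact ⟨v, hvu, hv, ne_bot_of_le_ne_bot hva (inf_le_inf_left _ inf_le_left)⟩

theorem trans (hS₂ : IsCompleteSubalgebra S₂) (h12 : S₁ ⊆ S₂) {V : Set ι} (hVU : V ⊆ U)
    (h₁ : PatternTransferWitness m S₁ V j₁ A₁ a1 a2)
    (h₂ : PatternTransferWitness m S₂ U j₂ A₂ a2 a3) :
    PatternTransferWitness m S₁ V (j₁ + j₂ + 2) (A₁ ∪ A₂) a1 a3 := by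
  refine ⟨fun α hα => ?_, fun n hn i hi u hu hlt hcard a ha ha0 hau => ?_⟩
  · obtain ⟨ha1, ha10, hproj⟩ := h₁.1 α hα
    obtain ⟨ha2, -, hproj'⟩ := h₂.1 α (hVU hα)
    exact ⟨ha1, ha10, hproj.trans hS₂.infClosed h12 ha2 hproj'⟩
  have hn2 : 2 ≤ n := by omega
  obtain ⟨v, hvu, hv, hva⟩ :=
    h₁.2 n (fun h => hn (.inl h)) i (by omega) u hu hlt hcard a ha ha0 hau
  have hvU : ↑v ⊆ U := fun α hα => hVU (hu (hvu hα))
  have hvS : v.inf a2 ⊓ a ∈ S₂ :=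
    hS₂.infClosed (hS₂.finsetInf_mem fun α hα => (h₂.1 α (hvU hα)).1) (h12 ha)
  obtain ⟨w, hwv, hw, hwa⟩ := h₂.2 n (fun h => hn (.inr h)) (i + j₁ + 1) (by omega) v hvU
    (hlt.trans_le (Nat.mul_pow_pow_le_of_le_mul_pow_pow hn2 (by omega) (by omega) hv))
    ((Finset.card_le_card hvu).trans_lt hcard) _ hvS hva inf_le_left
  refine ⟨w, hwv.trans hvu, ?_, ne_bot_of_le_ne_bot hwa (inf_le_inf_left _ inf_le_right)⟩
  exact hv.trans (Nat.mul_pow_pow_le_of_le_mul_pow_pow hn2 (by omega) (by omega) hw)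

end PatternTransferWitness

theorem patternTransfer_trans_general (κ : Cardinal.{u})
    (hreg : κ.IsRegular)
    (I : Set (Set ℕ)) (hI : IsIdealOnNat I) (m : ℕ → ℕ)
    {B : Type v} [CompleteBooleanAlgebra B] (S₁ S₂ S₃ : Set B)
    (h12 : PatternTransfer κ I m S₁ S₂) (h23 : PatternTransfer κ I m S₂ S₃) :
    PatternTransfer κ I m S₁ S₃ := by
  obtain ⟨hS₁, hS₂, hS₁₂, hcc, H12⟩ := h12
  obtain ⟨-, hS₃, hS₂₃, -, H23⟩ := h23
  refine ⟨hS₁, hS₃, hS₁₂.trans hS₂₃, hcc, fun U hU a3 ha3 hinj => ?_⟩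
  obtain ⟨j₂, U', hU'U, hU', A₂, hA₂, a2, (hw₂ : PatternTransferWitness m S₂ U' j₂ A₂ a2 a3)⟩ :=
    H23 U hU a3 ha3 hinj
  rcases exists_mk_fiber_eq_or_exists_injOn hreg hU' a2 with
    ⟨α₀, hα₀, hF⟩ | ⟨V, hVU', hV, hinjV⟩
  · obtain ⟨hb, hb0, -⟩ := hw₂.1 α₀ hα₀
    obtain ⟨p, hp, hp0, hpb⟩ := exists_belowProj hS₁ hb0
    exact ⟨j₂, _, (sep_subset _ _).trans hU'U, hF, A₂, hA₂, fun _ => p,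
      hw₂.of_const hS₂.infClosed hS₁₂ (sep_subset _ _) hb (fun α hα => hα.2) hp hp0 hpb⟩
  · obtain ⟨j₁, U₁, hU₁V, hU₁, A₁, hA₁, a1,
        (hw₁ : PatternTransferWitness m S₁ U₁ j₁ A₁ a1 a2)⟩ :=
      H12 V hV a2 (fun α hα => (hw₂.1 α (hVU' hα)).imp_right And.left)
        (fun α hα β hβ => hinjV hα hβ)
    exact ⟨j₁ + j₂ + 2, U₁, hU₁V.trans (hVU'.trans hU'U), hU₁, A₁ ∪ A₂, hI.2.2 _ hA₁ _ hA₂, a1,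
      hw₁.trans hS₂ hS₁₂ (hU₁V.trans hVU') hw₂⟩

/-- (Observation 7.12: transitivity of pattern transfer.)  If `ℬ₁ ⋖ ℬ₂ ⋖ ℬ₃`
are complete Boolean algebras (represented as complete subalgebras
`S₁ ⊆ S₂ ⊆ S₃` of a complete Boolean algebra `B`) and both pairs `(S₁,S₂)` and
`(S₂,S₃)` have the `(κ,I,m)`-pattern transfer property, then so does the pair
`(S₁,S₃)`. -/
theorem patternTransfer_trans (κ : Cardinal.{u})
    (hreg : κ.IsRegular) (hunc : Cardinal.aleph0 < κ)
    (I : Set (Set ℕ)) (hI : IsIdealOnNat I) (m : ℕ → ℕ) (hm : FastSeq m)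
    {B : Type v} [CompleteBooleanAlgebra B] (S₁ S₂ S₃ : Set B)
    (h12 : PatternTransfer κ I m S₁ S₂) (h23 : PatternTransfer κ I m S₂ S₃) :
    PatternTransfer κ I m S₁ S₃ :=
  patternTransfer_trans_general κ hreg I hI m S₁ S₂ S₃ h12 h23
end

section
/- Let δ be an ordinal and ⟨ℬ_γ : γ ≤ δ⟩ a family of complete Boolean algebras equipped with a commuting system of injective Boolean-algebra homomorphisms e_{β,γ} : ℬ_β → ℬ_γ for β ≤ γ ≤ δ (with e_{γ,γ} the identity), such that: each successor-step embedding e_{γ,γ+1} preserves arbitrary suprema; and for each limit ordinal γ ≤ δ the union ⋃_{β<γ} e_{β,γ}[ℬ_β] is dense in ℬ_γ (every nonzero element of ℬ_γ lies above a nonzero element of this union). Then: (1) for all β < γ ≤ δ the embedding e_{β,γ} preserves arbitrary suprema; and (2) if for every β < γ (γ ≤ δ a limit ordinal) an ultrafilter D_β on ℬ_β is given with e_{β,β'}[D_β] ⊆ D_{β'} for all β ≤ β' < γ, then the set ⋃_{β<γ} e_{β,γ}[D_β] has the finite intersection property in ℬ_γ and hence extends to an ultrafilter on ℬ_γ. 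-/
universe u v

def IsUltrafilterOn {B : Type v} [CompleteBooleanAlgebra B] (D : Set B) : Prop :=
  ⊥ ∉ D ∧ (∀ a ∈ D, ∀ b : B, a ≤ b → b ∈ D) ∧
    (∀ a ∈ D, ∀ b ∈ D, a ⊓ b ∈ D) ∧ ∀ a : B, a ∈ D ∨ aᶜ ∈ D

/-!
Preservation of suprema is proved by induction on `γ`. Successor steps compose. At a limit `γ`, if
`e(⋁ T)` were not below `⋁ e[T]`, density puts the image of a nonzero `a` from an earlier stage `η`
under `e(⋁ T) ⊓ (⋁ e[T])ᶜ`; taking `η > β`, the induction hypothesis at `η` makes `a` meet some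
`e(t)` with `t ∈ T`, and the embedding into `ℬ_γ` keeps the two non-disjoint, a contradiction.

At a limit `γ` the stages below `γ` are directed and the ultrafilters are compatible, so the union of
their images is closed under `⊓`, contains `⊤` and avoids `⊥`; the prime ideal theorem for
distributive lattices then extends it to an ultrafilter.
-/

open Order

theorem IsUltrafilterOn.top_mem {B : Type*} [CompleteBooleanAlgebra B] {D : Set B}
    (hD : IsUltrafilterOn D) : ⊤ ∈ D := by
  obtain h | h := hD.2.2.2 ⊥
  · exact absurd h hD.1
  · rwa [compl_bot] at h

theorem exists_isUltrafilterOn_superset {B : Type*} [CompleteBooleanAlgebra B] {S : Set B}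
    (hS : ∀ F : Finset B, ↑F ⊆ S → F.inf id ≠ ⊥) : ∃ D, IsUltrafilterOn D ∧ S ⊆ D := by
  classical
  let G : Set B := {b | ∃ F : Finset B, ↑F ⊆ S ∧ F.inf id ≤ b}
  have hG : IsPFilter G := by
    refine IsPFilter.of_def ⟨⊤, ∅, by simp, le_top⟩ ?_ ?_
    · rintro a ⟨F, hF, ha⟩ b ⟨F', hF', hb⟩
      refine ⟨(F ∪ F').inf id, ⟨F ∪ F', by simpa using ⟨hF, hF'⟩, le_rfl⟩, ?_, ?_⟩
      · exact (Finset.inf_mono Finset.subset_union_left).trans ha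
      · exact (Finset.inf_mono Finset.subset_union_right).trans hb
    · rintro a b hab ⟨F, hF, ha⟩
      exact ⟨F, hF, ha.trans hab⟩
  have hdisj : Disjoint (hG.toPFilter : Set B) (Ideal.principal (⊥ : B) : Set B) :=
    Set.disjoint_left.2 fun b ⟨F, hF, hb⟩ hb' => hS F hF (le_bot_iff.1 (hb.trans hb'))
  obtain ⟨J, hJ, -, hJG⟩ := DistribLattice.prime_ideal_of_disjoint_filter_ideal hdisj
  refine ⟨(J : Set B)ᶜ, ⟨fun h => h J.bot_mem, fun a ha b hab hb => ha (J.lower hab hb),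
    fun a ha b hb hab => (hJ.mem_or_mem hab).elim ha hb, fun a => hJ.notMem_or_compl_notMem⟩,
    fun s hs => Set.disjoint_left.1 hJG ⟨{s}, by simpa using hs, by simp⟩⟩

theorem le_sSup_iff_forall_not_disjoint {α : Type*} [CompleteBooleanAlgebra α] {x : α}
    {U : Set α} : x ≤ sSup U ↔ ∀ c ≤ x, c ≠ ⊥ → ∃ u ∈ U, ¬Disjoint c u := by
  refine ⟨fun hx c hc hc0 => ?_, fun h => ?_⟩
  · by_contra! hU
    exact hc0 ((disjoint_sSup_iff.2 hU).eq_bot_of_le (hc.trans hx))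
  · by_contra hx
    obtain ⟨u, hu, hcu⟩ := h (x ⊓ (sSup U)ᶜ) inf_le_left
      (fun h0 => hx (disjoint_compl_right_iff.1 (disjoint_iff.2 h0)))
    exact hcu (disjoint_compl_left.mono inf_le_right (le_sSup hu))

structure IsBooleanEmbeddingSystem (δ : Ordinal.{u}) (B : Ordinal.{u} → Type v)
    [∀ γ, BooleanAlgebra (B γ)] (e : ∀ β γ : Ordinal.{u}, β ≤ γ → B β → B γ) : Prop where
  comp : ∀ (β γ η : Ordinal.{u}) (h1 : β ≤ γ) (h2 : γ ≤ η), η ≤ δ →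
    ∀ b : B β, e γ η h2 (e β γ h1 b) = e β η (h1.trans h2) b
  injective : ∀ (β γ : Ordinal.{u}) (h : β ≤ γ), γ ≤ δ → Function.Injective (e β γ h)
  map_inf : ∀ (β γ : Ordinal.{u}) (h : β ≤ γ), γ ≤ δ →
    ∀ a b : B β, e β γ h (a ⊓ b) = e β γ h a ⊓ e β γ h b
  map_compl : ∀ (β γ : Ordinal.{u}) (h : β ≤ γ), γ ≤ δ → ∀ a : B β, e β γ h aᶜ = (e β γ h a)ᶜ

namespace IsBooleanEmbeddingSystem

variable {δ : Ordinal.{u}} {B : Ordinal.{u} → Type v} {e : ∀ β γ : Ordinal.{u}, β ≤ γ → B β → B γ}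
  {β γ : Ordinal.{u}}

section BooleanAlgebra

variable [∀ γ, BooleanAlgebra (B γ)]

theorem map_bot (he : IsBooleanEmbeddingSystem δ B e) (h : β ≤ γ) (hγ : γ ≤ δ) :
    e β γ h ⊥ = ⊥ := by
  rw [← inf_compl_self ⊥, he.map_inf β γ h hγ, he.map_compl β γ h hγ, inf_compl_self]

theorem map_top (he : IsBooleanEmbeddingSystem δ B e) (h : β ≤ γ) (hγ : γ ≤ δ) :
    e β γ h ⊤ = ⊤ := by
  rw [← compl_bot, he.map_compl β γ h hγ, he.map_bot h hγ, compl_bot]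

theorem map_le_map_iff (he : IsBooleanEmbeddingSystem δ B e) (h : β ≤ γ) (hγ : γ ≤ δ)
    {a b : B β} : e β γ h a ≤ e β γ h b ↔ a ≤ b := by
  rw [← inf_eq_left, ← he.map_inf β γ h hγ, (he.injective β γ h hγ).eq_iff, inf_eq_left]

theorem map_eq_bot_iff (he : IsBooleanEmbeddingSystem δ B e) (h : β ≤ γ) (hγ : γ ≤ δ)
    {a : B β} : e β γ h a = ⊥ ↔ a = ⊥ := by
  rw [← he.map_bot h hγ, (he.injective β γ h hγ).eq_iff]

theorem disjoint_map_iff (he : IsBooleanEmbeddingSystem δ B e) (h : β ≤ γ) (hγ : γ ≤ δ)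
    {a b : B β} : Disjoint (e β γ h a) (e β γ h b) ↔ Disjoint a b := by
  rw [disjoint_iff, disjoint_iff, ← he.map_inf β γ h hγ, he.map_eq_bot_iff h hγ]

end BooleanAlgebra

variable [∀ γ, CompleteBooleanAlgebra (B γ)]

theorem map_sSup_add_one (he : IsBooleanEmbeddingSystem δ B e) {η : Ordinal.{u}}
    (hη : η + 1 ≤ δ)
    (hsucc : ∀ T : Set (B η), e η (η + 1) le_self_add (sSup T) =
      sSup (e η (η + 1) le_self_add '' T))
    (ih : ∀ β (h : β < η) (T : Set (B β)), e β η h.le (sSup T) = sSup (e β η h.le '' T))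
    (h : β < η + 1) (T : Set (B β)) :
    e β (η + 1) h.le (sSup T) = sSup (e β (η + 1) h.le '' T) := by
  obtain rfl | hβη := (Order.lt_add_one_iff.1 h).eq_or_lt
  · exact hsucc T
  · have hcomp := he.comp β η (η + 1) hβη.le le_self_add hη
    rw [← hcomp, ih β hβη, hsucc, Set.image_image]
    simp only [hcomp]

theorem map_sSup_of_isSuccLimit (he : IsBooleanEmbeddingSystem δ B e) (hγ : γ ≤ δ)
    (hlim : IsSuccLimit γ)
    (hdense : ∀ b : B γ, b ≠ ⊥ → ∃ α, ∃ hα : α < γ, ∃ a : B α, a ≠ ⊥ ∧ e α γ hα.le a ≤ b)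
    (ih : ∀ η < γ, ∀ β (h : β < η) (T : Set (B β)),
      e β η h.le (sSup T) = sSup (e β η h.le '' T))
    (h : β < γ) (T : Set (B β)) : e β γ h.le (sSup T) = sSup (e β γ h.le '' T) := by
  have hmono : Monotone (e β γ h.le) := fun a b hab => (he.map_le_map_iff h.le hγ).2 hab
  refine le_antisymm (le_sSup_iff_forall_not_disjoint.2 fun c hc hc0 => ?_)
    (sSup_image.trans_le hmono.le_map_sSup)
  obtain ⟨α, hα, a, ha0, hac⟩ := hdense c hc0
  -- `β + 1` forces `β < η`, which the induction hypothesis needs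
  let η := max (β + 1) α
  have hη : η < γ := max_lt (hlim.add_one_lt h) hα
  have hβη : β < η := (Order.lt_add_one_iff.2 le_rfl).trans_le (le_max_left _ _)
  have hαη : α ≤ η := le_max_right _ _
  have hcomp := he.comp β η γ hβη.le hη.le hγ
  have ha : e α η hαη a ≤ sSup (e β η hβη.le '' T) := by
    rw [← ih η hη β hβη T, ← he.map_le_map_iff hη.le hγ, he.comp α η γ hαη hη.le hγ, hcomp]
    exact hac.trans hc
  obtain ⟨_, ⟨t, ht, rfl⟩, hat⟩ := le_sSup_iff_forall_not_disjoint.1 ha _ le_rfl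
    (mt (he.map_eq_bot_iff hαη (hη.le.trans hγ)).1 ha0)
  refine ⟨e β γ h.le t, ⟨t, ht, rfl⟩, fun hct => hat ?_⟩
  rw [← he.disjoint_map_iff hη.le hγ, he.comp α η γ hαη hη.le hγ, hcomp]
  exact hct.mono_left hac

theorem map_sSup (he : IsBooleanEmbeddingSystem δ B e)
    (hsucc : ∀ γ : Ordinal.{u}, γ + 1 ≤ δ → ∀ T : Set (B γ),
      e γ (γ + 1) le_self_add (sSup T) = sSup (e γ (γ + 1) le_self_add '' T))
    (hdense : ∀ γ ≤ δ, IsSuccLimit γ → ∀ b : B γ, b ≠ ⊥ →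
      ∃ α, ∃ hα : α < γ, ∃ a : B α, a ≠ ⊥ ∧ e α γ hα.le a ≤ b)
    (h : β < γ) (hγ : γ ≤ δ) (T : Set (B β)) :
    e β γ h.le (sSup T) = sSup (e β γ h.le '' T) := by
  induction γ using Ordinal.limitRecOn generalizing β with
  | zero => exact absurd h not_lt_zero
  | add_one η ih =>
    exact he.map_sSup_add_one hγ (hsucc η hγ)
      (fun β h T => ih h (le_self_add.trans hγ) T) h T
  | limit γ hlim ih =>
    exact he.map_sSup_of_isSuccLimit hγ hlim (hdense γ hγ hlim)
      (fun η hη β h T => ih η hη h (hη.le.trans hγ) T) h T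

theorem finset_inf_ne_bot_of_subset_iUnion_image (he : IsBooleanEmbeddingSystem δ B e)
    (hγ : γ ≤ δ) (hlim : IsSuccLimit γ) {D : ∀ β, Set (B β)}
    (hD : ∀ β < γ, IsUltrafilterOn (D β))
    (hDc : ∀ (β β' : Ordinal.{u}) (h : β ≤ β'), β' < γ → ∀ a ∈ D β, e β β' h a ∈ D β')
    (F : Finset (B γ)) (hF : ↑F ⊆ ⋃ β, ⋃ h : β < γ, e β γ h.le '' D β) : F.inf id ≠ ⊥ := by
  set S := ⋃ β, ⋃ h : β < γ, e β γ h.le '' D β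
  have htop : ⊤ ∈ S :=
    Set.mem_iUnion₂.2 ⟨0, hlim.pos, ⊤, (hD 0 hlim.pos).top_mem, he.map_top _ hγ⟩
  have hbot : ⊥ ∉ S := by
    simp only [S, Set.mem_iUnion, Set.mem_image, not_exists, not_and]
    intro β hβ d hd hd0
    exact (hD β hβ).1 ((he.map_eq_bot_iff hβ.le hγ).1 hd0 ▸ hd)
  have hinf : ∀ x ∈ S, ∀ y ∈ S, x ⊓ y ∈ S := by
    simp only [S, Set.mem_iUnion, Set.mem_image]
    rintro _ ⟨β, hβ, a, ha, rfl⟩ _ ⟨β', hβ', a', ha', rfl⟩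
    have hη : max β β' < γ := max_lt hβ hβ'
    refine ⟨max β β', hη, e β _ (le_max_left _ _) a ⊓ e β' _ (le_max_right _ _) a',
      (hD _ hη).2.2.1 _ (hDc _ _ _ hη a ha) _ (hDc _ _ _ hη a' ha'), ?_⟩
    rw [he.map_inf _ _ _ hγ, he.comp _ _ _ _ _ hγ, he.comp _ _ _ _ _ hγ]
  exact fun h0 => hbot (h0 ▸ Finset.inf_mem S htop hinf F id hF)

end IsBooleanEmbeddingSystem

theorem embedding_sequence_sSup_and_ultrafilter_general
    (δ : Ordinal.{u}) (B : Ordinal.{u} → Type v)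
    [inst : ∀ γ, CompleteBooleanAlgebra (B γ)]
    (e : ∀ β γ : Ordinal.{u}, β ≤ γ → B β → B γ)
    (hcomp : ∀ (β γ η : Ordinal.{u}) (h1 : β ≤ γ) (h2 : γ ≤ η), η ≤ δ →
      ∀ b : B β, e γ η h2 (e β γ h1 b) = e β η (h1.trans h2) b)
    (hinj : ∀ (β γ : Ordinal.{u}) (h : β ≤ γ), γ ≤ δ →
      Function.Injective (e β γ h))
    (hcompl : ∀ (β γ : Ordinal.{u}) (h : β ≤ γ), γ ≤ δ →
      ∀ a : B β, e β γ h aᶜ = (e β γ h a)ᶜ)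
    (hinf : ∀ (β γ : Ordinal.{u}) (h : β ≤ γ), γ ≤ δ →
      ∀ a b : B β, e β γ h (a ⊓ b) = e β γ h a ⊓ e β γ h b)
    (hsucc : ∀ γ : Ordinal.{u}, γ + 1 ≤ δ → ∀ T : Set (B γ),
      e γ (γ + 1) (le_self_add (a := γ) (b := 1)) (sSup T) =
        sSup (e γ (γ + 1) (le_self_add (a := γ) (b := 1)) '' T))
    (hdense : ∀ γ ≤ δ, Order.IsSuccLimit γ → ∀ b : B γ, b ≠ ⊥ →
      ∃ β : Ordinal.{u}, ∃ hβ : β < γ, ∃ a : B β, a ≠ ⊥ ∧ e β γ hβ.le a ≤ b) :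
    (∀ (β γ : Ordinal.{u}) (h : β < γ), γ ≤ δ → ∀ T : Set (B β),
      e β γ h.le (sSup T) = sSup (e β γ h.le '' T)) ∧
    (∀ γ ≤ δ, Order.IsSuccLimit γ → ∀ D : ∀ β : Ordinal.{u}, Set (B β),
      (∀ β < γ, IsUltrafilterOn (D β)) →
      (∀ (β β' : Ordinal.{u}) (h : β ≤ β'), β' < γ →
        ∀ a ∈ D β, e β β' h a ∈ D β') →
      (∀ F : Finset (B γ),
        (↑F : Set (B γ)) ⊆ (⋃ β : Ordinal.{u}, ⋃ h : β < γ, e β γ h.le '' D β) →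
        F.inf id ≠ ⊥) ∧
      ∃ Dγ : Set (B γ), IsUltrafilterOn Dγ ∧
        (⋃ β : Ordinal.{u}, ⋃ h : β < γ, e β γ h.le '' D β) ⊆ Dγ) := by
  have he : IsBooleanEmbeddingSystem δ B e := ⟨hcomp, hinj, hinf, hcompl⟩
  refine ⟨fun β γ h hγ T => he.map_sSup hsucc hdense h hγ T, fun γ hγ hlim D hD hDc => ?_⟩
  have hfip := he.finset_inf_ne_bot_of_subset_iUnion_image hγ hlim hD hDc
  exact ⟨hfip, exists_isUltrafilterOn_superset hfip⟩

/-- (Claim 9.8.)  Let `⟨ℬ_γ : γ ≤ δ⟩` be a family of complete Boolean algebras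
with a commuting system of injective Boolean-algebra embeddings `e β γ`, such
that every successor-step embedding preserves arbitrary suprema and at each
limit `γ ≤ δ` the union of the images `e β γ '' ℬ_β` (`β < γ`) is dense in
`ℬ_γ`.  Then (1) every embedding `e β γ` (`β < γ ≤ δ`) preserves arbitrary
suprema; and (2) at each limit `γ ≤ δ`, for any compatible system of
ultrafilters `D β` (`β < γ`), the union `⋃_{β<γ} e β γ '' D β` has the finite
intersection property in `ℬ_γ`, hence extends to an ultrafilter on `ℬ_γ`. -/
theorem embedding_sequence_sSup_and_ultrafilter
    (δ : Ordinal.{u}) (B : Ordinal.{u} → Type v)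
    [inst : ∀ γ, CompleteBooleanAlgebra (B γ)]
    (e : ∀ β γ : Ordinal.{u}, β ≤ γ → B β → B γ)
    (hid : ∀ γ ≤ δ, ∀ b : B γ, e γ γ le_rfl b = b)
    (hcomp : ∀ (β γ η : Ordinal.{u}) (h1 : β ≤ γ) (h2 : γ ≤ η), η ≤ δ →
      ∀ b : B β, e γ η h2 (e β γ h1 b) = e β η (h1.trans h2) b)
    (hinj : ∀ (β γ : Ordinal.{u}) (h : β ≤ γ), γ ≤ δ →
      Function.Injective (e β γ h))
    (hbot : ∀ (β γ : Ordinal.{u}) (h : β ≤ γ), γ ≤ δ → e β γ h ⊥ = ⊥)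
    (hcompl : ∀ (β γ : Ordinal.{u}) (h : β ≤ γ), γ ≤ δ →
      ∀ a : B β, e β γ h aᶜ = (e β γ h a)ᶜ)
    (hinf : ∀ (β γ : Ordinal.{u}) (h : β ≤ γ), γ ≤ δ →
      ∀ a b : B β, e β γ h (a ⊓ b) = e β γ h a ⊓ e β γ h b)
    (hsucc : ∀ γ : Ordinal.{u}, γ + 1 ≤ δ → ∀ T : Set (B γ),
      e γ (γ + 1) (le_self_add (a := γ) (b := 1)) (sSup T) =
        sSup (e γ (γ + 1) (le_self_add (a := γ) (b := 1)) '' T))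
    (hdense : ∀ γ ≤ δ, Order.IsSuccLimit γ → ∀ b : B γ, b ≠ ⊥ →
      ∃ β : Ordinal.{u}, ∃ hβ : β < γ, ∃ a : B β, a ≠ ⊥ ∧ e β γ hβ.le a ≤ b) :
    (∀ (β γ : Ordinal.{u}) (h : β < γ), γ ≤ δ → ∀ T : Set (B β),
      e β γ h.le (sSup T) = sSup (e β γ h.le '' T)) ∧
    (∀ γ ≤ δ, Order.IsSuccLimit γ → ∀ D : ∀ β : Ordinal.{u}, Set (B β),
      (∀ β < γ, IsUltrafilterOn (D β)) →
      (∀ (β β' : Ordinal.{u}) (h : β ≤ β'), β' < γ →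
        ∀ a ∈ D β, e β β' h a ∈ D β') →
      (∀ F : Finset (B γ),
        (↑F : Set (B γ)) ⊆ (⋃ β : Ordinal.{u}, ⋃ h : β < γ, e β γ h.le '' D β) →
        F.inf id ≠ ⊥) ∧
      ∃ Dγ : Set (B γ), IsUltrafilterOn Dγ ∧
        (⋃ β : Ordinal.{u}, ⋃ h : β < γ, e β γ h.le '' D β) ⊆ Dγ) :=
  embedding_sequence_sSup_and_ultrafilter_general δ B (inst := inst) e hcomp hinj hcompl hinf hsucc
    hdense
end
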